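/- arXiv:math/9905097 — 14 statements merged into one kernel-verified Lean document; each statement's English description precedes it below -/
import Mathlib

section
/- Let (Γ, m, E, s) be a groupoid in the sense of Zakrzewski. If a, b ∈ E then m(a, b) := {z : (z; a, b) ∈ m} is nonempty if and only if a = b, and in that case m(a, a) = {a}. -/
/-- A groupoid in the sense of Zakrzewski: `m z x y` means `(z; x, y) ∈ m`,
`E` is the set of identities and `s` is the inverse map. -/
def IsZGroupoid {Γ : Type*} (m : Γ → Γ → Γ → Prop) (E : Set Γ) (s : Γ → Γ) : Prop :=
  (∀ x, s (s x) = x) ∧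
  (∀ x y w z, (∃ u, m u x y ∧ m z u w) ↔ (∃ v, m v y w ∧ m z x v)) ∧
  (∀ z x, (∃ a ∈ E, m z a x) ↔ z = x) ∧
  (∀ z x, (∃ a ∈ E, m z x a) ↔ z = x) ∧
  (∀ z x y, m (s z) x y ↔ m z (s y) (s x)) ∧
  (∀ x, ∃ z, m z (s x) x) ∧
  (∀ x z, m z (s x) x → z ∈ E)

/-- For identities `a, b ∈ E`, the set `m(a, b)` is nonempty iff `a = b`,
and in that case `m(a, a) = {a}`. -/
theorem stmt0 {Γ : Type*} (m : Γ → Γ → Γ → Prop) (E : Set Γ) (s : Γ → Γ)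
    (hG : IsZGroupoid m E s) :
    ∀ a ∈ E, ∀ b ∈ E, ({z | m z a b}.Nonempty ↔ a = b) ∧ {z | m z a a} = {a} := by
  obtain ⟨-, -, hL, hR, -, -, -⟩ := hG
  intro a ha b hb
  have hmaaa : m a a a := by
    obtain ⟨e, he, hme⟩ := (hL a a).mpr rfl
    have : a = e := (hR a e).mp ⟨a, ha, hme⟩
    rwa [← this] at hme
  constructor
  · constructor
    · rintro ⟨z, hz⟩
      have h1 : z = b := (hL z b).mp ⟨a, ha, hz⟩
      have h2 : z = a := (hR z a).mp ⟨b, hb, hz⟩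
      rw [← h1, ← h2]
    · rintro rfl; exact ⟨a, hmaaa⟩
  · ext z
    simp only [Set.mem_setOf_eq, Set.mem_singleton_iff]
    exact ⟨fun h => (hL z a).mp ⟨a, ha, h⟩, fun h => h ▸ hmaaa⟩
end

section
/- Let (Γ, m, E, s) be a groupoid in the sense of Zakrzewski. For every x ∈ Γ, m(s(x), x) = {e_R(x)} and m(x, s(x)) = {e_L(x)}, i.e. (z; s(x), x) ∈ m if and only if z = e_R(x), and (z; x, s(x)) ∈ m if and only if z = e_L(x). -/
/-- `m(s(x), x) = {e_R(x)}` and `m(x, s(x)) = {e_L(x)}`. -/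
theorem stmt2 {Γ : Type*} (m : Γ → Γ → Γ → Prop) (E : Set Γ) (s : Γ → Γ)
    (hG : IsZGroupoid m E s)
    (eL eR : Γ → Γ)
    (hL : ∀ x, eL x ∈ E ∧ m x (eL x) x)
    (hR : ∀ x, eR x ∈ E ∧ m x x (eR x)) :
    ∀ x z, (m z (s x) x ↔ z = eR x) ∧ (m z x (s x) ↔ z = eL x) := by
  obtain ⟨hss, hassoc, hidL, hidR, hinv, hpos, hposE⟩ := hG
  intro x
  -- key: anything in m(s x, x) equals eR x
  have keyR : ∀ z, m z (s x) x → z = eR x := by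
    intro z hz
    -- associativity with (s x, x, eR x)
    have hr := (hassoc (s x) x (eR x) z).mpr ⟨x, (hR x).2, hz⟩
    obtain ⟨u, hu1, hu2⟩ := hr
    have huE : u ∈ E := hposE x u hu1
    exact (hidL z (eR x)).mp ⟨u, huE, hu2⟩
  -- anything in m(x, s x) equals eL x
  have keyL : ∀ z, m z x (s x) → z = eL x := by
    intro z hz
    -- associativity with (eL x, x, s x)
    have hr := (hassoc (eL x) x (s x) z).mp ⟨x, (hL x).2, hz⟩
    obtain ⟨v, hv1, hv2⟩ := hr
    have hv1' : m v (s (s x)) (s x) := by rw [hss]; exact hv1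
    have hvE : v ∈ E := hposE (s x) v hv1'
    exact (hidR z (eL x)).mp ⟨v, hvE, hv2⟩
  -- existence
  obtain ⟨zR, hzR⟩ := hpos x
  obtain ⟨zL, hzL'⟩ := hpos (s x)
  have hzL : m zL x (s x) := by rw [hss] at hzL'; exact hzL'
  have heR : m (eR x) (s x) x := (keyR zR hzR) ▸ hzR
  have heL : m (eL x) x (s x) := (keyL zL hzL) ▸ hzL
  intro z
  refine ⟨⟨keyR z, fun h => h ▸ heR⟩, ⟨keyL z, fun h => h ▸ heL⟩⟩
end

section
/- Let (Γ, m, E, s) be a groupoid in the sense of Zakrzewski. For all x, y ∈ Γ, the set m(x, y) := {z : (z; x, y) ∈ m} is nonempty if and only if e_R(x) = e_L(y). -/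
/-- `m(x, y)` is nonempty iff `e_R(x) = e_L(y)`. -/
theorem stmt3 {Γ : Type*} (m : Γ → Γ → Γ → Prop) (E : Set Γ) (s : Γ → Γ)
    (hG : IsZGroupoid m E s)
    (eL eR : Γ → Γ)
    (hL : ∀ x, eL x ∈ E ∧ m x (eL x) x)
    (hR : ∀ x, eR x ∈ E ∧ m x x (eR x)) :
    ∀ x y, {z | m z x y}.Nonempty ↔ eR x = eL y := by
  obtain ⟨hss, hassoc, hidL, hidR, hinv, hpos, hposE⟩ := hG
  intro x y
  constructor
  · rintro ⟨z, hz⟩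
    obtain ⟨v, hv1, hv2⟩ := (hassoc x (eR x) y z).mp ⟨x, (hR x).2, hz⟩
    have hvy : v = y := (hidL v y).mp ⟨eR x, (hR x).1, hv1⟩
    rw [hvy] at hv1
    obtain ⟨u, hu1, hu2⟩ := (hassoc (eR x) (eL y) y y).mpr ⟨y, (hL y).2, hv1⟩
    have h3 : u = eL y := (hidL u (eL y)).mp ⟨eR x, (hR x).1, hu1⟩
    have h4 : u = eR x := (hidR u (eR x)).mp ⟨eL y, (hL y).1, hu1⟩
    rw [← h3, ← h4]
  · intro heq
    obtain ⟨f, hf⟩ := hpos x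
    have hfE := hposE x f hf
    obtain ⟨u, hu1, hu2⟩ := (hassoc (s x) x (eR x) f).mpr ⟨x, (hR x).2, hf⟩
    have huE := hposE x u hu1
    have hfe : f = eR x := (hidL f (eR x)).mp ⟨u, huE, hu2⟩
    subst hfe
    have hy : m y (eR x) y := by rw [heq]; exact (hL y).2
    obtain ⟨v, hv1, hv2⟩ := (hassoc (s x) x y y).mp ⟨eR x, hf, hy⟩
    exact ⟨v, hv1⟩
end

section
/- Let (Γ, m, E, s) be a groupoid in the sense of Zakrzewski. For all x, y ∈ Γ, if there exists a ∈ E with (a; x, y) ∈ m, then y = s(x). -/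
/-- If `m(x, y)` contains an identity then `y = s(x)`. -/
theorem stmt4 {Γ : Type*} (m : Γ → Γ → Γ → Prop) (E : Set Γ) (s : Γ → Γ)
    (hG : IsZGroupoid m E s) :
    ∀ x y, (∃ a ∈ E, m a x y) → y = s x := by
  obtain ⟨hss, hassoc, hidl, hidr, hinv, hpos1, hpos2⟩ := hG
  rintro x y ⟨a, haE, haxy⟩
  -- Step 1: there is z₁ with m z₁ a (s a); z₁ ∈ E
  obtain ⟨z₁, hz₁⟩ := hpos1 (s a)
  rw [hss a] at hz₁
  have hz₁E : z₁ ∈ E := hpos2 (s a) z₁ (by rwa [hss a])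
  -- Step 2: left identity forces z₁ = s a, so m (s a) a (s a)
  have hz₁sa : z₁ = s a := (hidl z₁ (s a)).1 ⟨a, haE, hz₁⟩
  have hsasa : m (s a) a (s a) := hz₁sa ▸ hz₁
  have hsaE : s a ∈ E := hz₁sa ▸ hz₁E
  -- Step 3: right identity forces s a = a, so m a a a
  have hsaa : s a = a := (hidr (s a) a).1 ⟨s a, hsaE, hsasa⟩
  have haaa : m a a a := by rw [hsaa] at hsasa; exact hsasa
  -- Step 4: assoc (a, x, y) at z = a gives u with m u a x ∧ m a u y; u = x
  obtain ⟨u, hu1, hu2⟩ := (hassoc a x y a).2 ⟨a, haxy, haaa⟩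
  have hux : u = x := (hidl u x).1 ⟨a, haE, hu1⟩
  have hxax : m x a x := hux ▸ hu1
  -- Step 5: inverse axiom gives m (s x) (s x) a
  have hsx : m (s x) (s x) a := by
    have := (hinv x (s x) (s a)).2 (by rw [hss x, hss a]; exact hxax)
    rwa [hsaa] at this
  -- Step 6: assoc (s x, x, y) at z = s x
  obtain ⟨w, hw1, hw2⟩ := (hassoc (s x) x y (s x)).2 ⟨a, haxy, hsx⟩
  have hwE : w ∈ E := hpos2 x w hw1
  exact ((hidl (s x) y).1 ⟨w, hwE, hw2⟩).symm
end

section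
/- Let (Γ, m, E, s) be a groupoid in the sense of Zakrzewski. For all x, y ∈ Γ, the set m(x, y) := {z : (z; x, y) ∈ m} consists of at most one point: if (z₁; x, y) ∈ m and (z₂; x, y) ∈ m then z₁ = z₂. -/
/-- `m(x, y)` consists of at most one point. -/
theorem stmt5 {Γ : Type*} (m : Γ → Γ → Γ → Prop) (E : Set Γ) (s : Γ → Γ)
    (hG : IsZGroupoid m E s) :
    ∀ x y z₁ z₂, m z₁ x y → m z₂ x y → z₁ = z₂ := by
  obtain ⟨hs, hassoc, hidl, _hidr, hinv, hpos, hposE⟩ := hG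
  intro x y z₁ z₂ h1 h2
  -- Step 1: produce u with m u (s z₂) x.
  obtain ⟨e, he⟩ := hpos z₂
  have hR : ∃ v, m v x y ∧ m e (s z₂) v := ⟨z₂, h2, he⟩
  obtain ⟨u, hu1, _hu2⟩ := (hassoc (s z₂) x y e).mpr hR
  -- Step 2: m (s u) (s x) z₂.
  have hsu : m (s u) (s x) z₂ := (hinv u (s x) z₂).mpr (by rw [hs]; exact hu1)
  -- Step 3: s u = y.
  have hsy : s u = y := by
    have hR2 : ∃ v, m v x y ∧ m (s u) (s x) v := ⟨z₂, h2, hsu⟩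
    obtain ⟨u', hu'1, hu'2⟩ := (hassoc (s x) x y (s u)).mpr hR2
    exact (hidl (s u) y).mp ⟨u', hposE x u' hu'1, hu'2⟩
  rw [hsy] at hsu
  -- Step 4: conclude z₁ = z₂.
  have hR3 : ∃ v, m v (s x) z₂ ∧ m z₁ x v := ⟨y, hsu, h1⟩
  obtain ⟨w, hw1, hw2⟩ := (hassoc x (s x) z₂ z₁).mpr hR3
  have hwE : w ∈ E := hposE (s x) w (by rwa [hs])
  exact (hidl z₁ z₂).mp ⟨w, hwE, hw2⟩
end

section
/- Let h : Γ → Γ' be a morphism of groupoids and define Gr(h₀) := Gr(h) ∩ (E' × E). Then {(e'_R(y), e_R(x)) : (y, x) ∈ Gr(h)} = Gr(h₀) = {(e'_L(y), e_L(x)) : (y, x) ∈ Gr(h)}, and for every b ∈ E' there is exactly one a ∈ E with (b, a) ∈ Gr(h₀); hence the transposed relation f_h := h₀ᵀ is a mapping E' → E. -/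
/-- A morphism of Zakrzewski groupoids from `(Γ, m, E, s)` to `(Γ', m', E', s')`:
`h y x` means `(y, x) ∈ Gr(h) ⊆ Γ' × Γ`. -/
def IsZMorphism {Γ Γ' : Type*} (m : Γ → Γ → Γ → Prop) (E : Set Γ) (s : Γ → Γ)
    (m' : Γ' → Γ' → Γ' → Prop) (E' : Set Γ') (s' : Γ' → Γ')
    (h : Γ' → Γ → Prop) : Prop :=
  (∀ y' x₁ x₂, (∃ x, m x x₁ x₂ ∧ h y' x) ↔ (∃ y₁ y₂, h y₁ x₁ ∧ h y₂ x₂ ∧ m' y' y₁ y₂)) ∧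
  (∀ y' x, h y' (s x) ↔ h (s' y') x) ∧
  {y' | ∃ a ∈ E, h y' a} = E'

section Aux

variable {Γ : Type*} {m : Γ → Γ → Γ → Prop} {E : Set Γ} {s : Γ → Γ}

/-- Any `z` with `(z; s x, x) ∈ m` equals any right identity of `x`. -/
lemma zg_A (hG : IsZGroupoid m E s) {x z a : Γ} (hz : m z (s x) x)
    (ha : a ∈ E) (hxa : m x x a) : z = a := by
  obtain ⟨-, assoc, idL, -, -, -, posE⟩ := hG
  obtain ⟨u, hu1, hu2⟩ := (assoc (s x) x a z).mpr ⟨x, hxa, hz⟩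
  exact (idL z a).mp ⟨u, posE x u hu1, hu2⟩

/-- Identities are idempotent. -/
lemma zg_mEaa (hG : IsZGroupoid m E s) {a : Γ} (ha : a ∈ E) : m a a a := by
  obtain ⟨-, -, idL, idR, -, -, -⟩ := hG
  obtain ⟨b, hb, hab⟩ := (idR a a).mpr rfl
  have hab' : a = b := (idL a b).mp ⟨a, ha, hab⟩
  subst hab'
  exact hab

/-- Identities are fixed by the inverse map. -/
lemma zg_sFix (hG : IsZGroupoid m E s) {a : Γ} (ha : a ∈ E) : s a = a := by
  obtain ⟨z, hz⟩ := hG.2.2.2.2.2.1 a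
  have h1 : z = a := zg_A hG hz ha (zg_mEaa hG ha)
  subst h1
  exact ((hG.2.2.2.1 z (s z)).mp ⟨z, ha, hz⟩).symm

/-- Uniqueness of right identities. -/
lemma zg_eR_unique (hG : IsZGroupoid m E s) {x a a' : Γ} (ha : a ∈ E) (ha' : a' ∈ E)
    (h1 : m x x a) (h2 : m x x a') : a = a' := by
  obtain ⟨z, hz⟩ := hG.2.2.2.2.2.1 x
  rw [← zg_A hG hz ha h1, ← zg_A hG hz ha' h2]

/-- Uniqueness of left identities. -/
lemma zg_eL_unique (hG : IsZGroupoid m E s) {x a a' : Γ} (ha : a ∈ E) (ha' : a' ∈ E)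
    (h1 : m x a x) (h2 : m x a' x) : a = a' := by
  have conv : ∀ b, b ∈ E → m x b x → m (s x) (s x) b := by
    intro b hb hbx
    rw [hG.2.2.2.2.1 x (s x) b, zg_sFix hG hb, hG.1 x]
    exact hbx
  exact zg_eR_unique hG ha ha' (conv a ha h1) (conv a' ha' h2)

end Aux

/-- For a morphism `h : Γ → Γ'` with `Gr(h₀) := Gr(h) ∩ (E' × E)`:
`(e'_R × e_R)(Gr(h)) = Gr(h₀) = (e'_L × e_L)(Gr(h))`, and for every `b ∈ E'` there is
exactly one `a ∈ E` with `(b, a) ∈ Gr(h₀)`, so `f_h := h₀ᵀ` is a mapping `E' → E`. -/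
theorem stmt6 {Γ Γ' : Type*}
    (m : Γ → Γ → Γ → Prop) (E : Set Γ) (s : Γ → Γ) (hG : IsZGroupoid m E s)
    (m' : Γ' → Γ' → Γ' → Prop) (E' : Set Γ') (s' : Γ' → Γ') (hG' : IsZGroupoid m' E' s')
    (eL eR : Γ → Γ)
    (hL : ∀ x, eL x ∈ E ∧ m x (eL x) x) (hR : ∀ x, eR x ∈ E ∧ m x x (eR x))
    (eL' eR' : Γ' → Γ')
    (hL' : ∀ y, eL' y ∈ E' ∧ m' y (eL' y) y) (hR' : ∀ y, eR' y ∈ E' ∧ m' y y (eR' y))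
    (h : Γ' → Γ → Prop) (hmor : IsZMorphism m E s m' E' s' h) :
    ((fun p : Γ' × Γ => (eR' p.1, eR p.2)) '' {p : Γ' × Γ | h p.1 p.2}
        = {p : Γ' × Γ | h p.1 p.2 ∧ p.1 ∈ E' ∧ p.2 ∈ E}) ∧
    ((fun p : Γ' × Γ => (eL' p.1, eL p.2)) '' {p : Γ' × Γ | h p.1 p.2}
        = {p : Γ' × Γ | h p.1 p.2 ∧ p.1 ∈ E' ∧ p.2 ∈ E}) ∧
    (∀ b ∈ E', ∃! a, a ∈ E ∧ h b a) := by
  obtain ⟨hi, hinv, hE⟩ := hmor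
  have memE' : ∀ y : Γ', (∃ a ∈ E, h y a) → y ∈ E' := fun y hy => hE ▸ hy
  -- fixed points of the identity maps
  have eRfix : ∀ a, a ∈ E → eR a = a := fun a ha =>
    zg_eR_unique hG (hR a).1 ha (hR a).2 (zg_mEaa hG ha)
  have eLfix : ∀ a, a ∈ E → eL a = a := fun a ha =>
    zg_eL_unique hG (hL a).1 ha (hL a).2 (zg_mEaa hG ha)
  have eR'fix : ∀ b, b ∈ E' → eR' b = b := fun b hb =>
    zg_eR_unique hG' (hR' b).1 hb (hR' b).2 (zg_mEaa hG' hb)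
  have eL'fix : ∀ b, b ∈ E' → eL' b = b := fun b hb =>
    zg_eL_unique hG' (hL' b).1 hb (hL' b).2 (zg_mEaa hG' hb)
  -- the morphism relation is stable under the identity maps
  have hRmap : ∀ y x, h y x → h (eR' y) (eR x) := by
    intro y x hyx
    obtain ⟨y₁, y₂, h1, h2, hm⟩ := (hi y x (eR x)).mp ⟨x, (hR x).2, hyx⟩
    have hy2 : y₂ ∈ E' := memE' y₂ ⟨eR x, (hR x).1, h2⟩
    have hyy : y = y₁ := (hG'.2.2.2.1 y y₁).mp ⟨y₂, hy2, hm⟩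
    subst hyy
    have he : y₂ = eR' y := zg_eR_unique hG' hy2 (hR' y).1 hm (hR' y).2
    rwa [he] at h2
  have hLmap : ∀ y x, h y x → h (eL' y) (eL x) := by
    intro y x hyx
    obtain ⟨y₁, y₂, h1, h2, hm⟩ := (hi y (eL x) x).mp ⟨x, (hL x).2, hyx⟩
    have hy1 : y₁ ∈ E' := memE' y₁ ⟨eL x, (hL x).1, h1⟩
    have hyy : y = y₂ := (hG'.2.2.1 y y₂).mp ⟨y₁, hy1, hm⟩
    subst hyy
    have he : y₁ = eL' y := zg_eL_unique hG' hy1 (hL' y).1 hm (hL' y).2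
    rwa [he] at h1
  refine ⟨?_, ?_, ?_⟩
  · ext ⟨b, a⟩
    constructor
    · rintro ⟨⟨y, x⟩, hyx, heq⟩
      injection heq with e1 e2
      subst e1; subst e2
      exact ⟨hRmap y x hyx, (hR' y).1, (hR x).1⟩
    · rintro ⟨hba, hbE, haE⟩
      exact ⟨(b, a), hba, by simp [eR'fix b hbE, eRfix a haE]⟩
  · ext ⟨b, a⟩
    constructor
    · rintro ⟨⟨y, x⟩, hyx, heq⟩
      injection heq with e1 e2
      subst e1; subst e2
      exact ⟨hLmap y x hyx, (hL' y).1, (hL x).1⟩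
    · rintro ⟨hba, hbE, haE⟩
      exact ⟨(b, a), hba, by simp [eL'fix b hbE, eLfix a haE]⟩
  · intro b hbE
    have hbbb : m' b b b := zg_mEaa hG' hbE
    have hbE' := hbE
    rw [← hE] at hbE'
    obtain ⟨a, haE, hba⟩ := hbE'
    refine ⟨a, ⟨haE, hba⟩, ?_⟩
    rintro a' ⟨ha'E, hba'⟩
    obtain ⟨x, hx, -⟩ := (hi b a' a).mpr ⟨b, b, hba', hba, hbbb⟩
    have e1 : x = a := (hG.2.2.1 x a).mp ⟨a', ha'E, hx⟩
    have e2 : x = a' := (hG.2.2.2.1 x a').mp ⟨a, haE, hx⟩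
    rw [← e1, ← e2]
end

section
/- Let h : Γ → Γ' be a morphism of groupoids, let b ∈ E' and let a := f_h(b) be the unique element of E with (b, a) ∈ Gr(h). Then for every x ∈ Γ with e_R(x) = a there is exactly one y ∈ Γ' with e'_R(y) = b and (y, x) ∈ Gr(h) (so the relation h_b^R with graph Gr(h) ∩ (F_r(b) × F_r(a)) is a mapping F_r(a) → F_r(b)); likewise, for every x ∈ Γ with e_L(x) = a there is exactly one y ∈ Γ' with e'_L(y) = b and (y, x) ∈ Gr(h). -/
section ZHelp

variable {Γ : Type*} {m : Γ → Γ → Γ → Prop} {E : Set Γ} {s : Γ → Γ} {eR : Γ → Γ}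

theorem zLemA (hG : IsZGroupoid m E s) (hR : ∀ x, eR x ∈ E ∧ m x x (eR x))
    (x z : Γ) (hz : m z (s x) x) : z = eR x := by
  obtain ⟨hs, hassoc, hidL, hidR, hinv, hpe, hpE⟩ := hG
  obtain ⟨u, hu1, hu2⟩ := (hassoc (s x) x (eR x) z).mpr ⟨x, (hR x).2, hz⟩
  exact (hidL z (eR x)).mp ⟨u, hpE x u hu1, hu2⟩

theorem zLemA' (hG : IsZGroupoid m E s) (hR : ∀ x, eR x ∈ E ∧ m x x (eR x))
    (x : Γ) : m (eR x) (s x) x := by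
  obtain ⟨z, hz⟩ := hG.2.2.2.2.2.1 x
  exact zLemA hG hR x z hz ▸ hz

theorem zLemB (hG : IsZGroupoid m E s) (hR : ∀ x, eR x ∈ E ∧ m x x (eR x))
    {x c : Γ} (hc : c ∈ E) (hxc : m x x c) : c = eR x := by
  have hA' := zLemA' hG hR x
  obtain ⟨hs, hassoc, hidL, hidR, hinv, hpe, hpE⟩ := hG
  obtain ⟨u, hu1, hu2⟩ := (hassoc (s x) x c (eR x)).mpr ⟨x, hxc, hA'⟩
  exact ((hidL (eR x) c).mp ⟨u, hpE x u hu1, hu2⟩).symm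

theorem zLemC (hG : IsZGroupoid m E s) (hR : ∀ x, eR x ∈ E ∧ m x x (eR x))
    {z x y : Γ} (hzxy : m z x y) : eR z = eR y := by
  obtain ⟨u, hu1, hu2⟩ := (hG.2.1 x y (eR y) z).mpr ⟨y, (hR y).2, hzxy⟩
  have hzu : z = u := (hG.2.2.2.1 z u).mp ⟨eR y, (hR y).1, hu2⟩
  rw [← hzu] at hu2
  exact (zLemB hG hR (hR y).1 hu2).symm

theorem zLemD (hG : IsZGroupoid m E s) (hR : ∀ x, eR x ∈ E ∧ m x x (eR x))
    {c : Γ} (hc : c ∈ E) : eR c = c := by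
  obtain ⟨a, haE, hca⟩ := (hG.2.2.2.1 c c).mpr rfl
  have h1 : c = a := (hG.2.2.1 c a).mp ⟨c, hc, hca⟩
  have h2 : a = eR c := zLemB hG hR haE hca
  exact (h1.trans h2).symm

theorem zLemG (hG : IsZGroupoid m E s) (hR : ∀ x, eR x ∈ E ∧ m x x (eR x))
    {c : Γ} (hc : c ∈ E) : s c = c := by
  have h1 : m c (s c) c := by
    have := zLemA' hG hR c
    rwa [zLemD hG hR hc] at this
  have h2 : m (s c) (s c) c := by
    refine (hG.2.2.2.2.1 c (s c) c).mpr ?_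
    rw [hG.1 c]
    exact h1
  have := zLemA hG hR c (s c) h2
  rwa [zLemD hG hR hc] at this

theorem zLemE (hG : IsZGroupoid m E s) (hR : ∀ x, eR x ∈ E ∧ m x x (eR x))
    {X Y : Γ} (hXY : eR X = eR (s Y)) : ∃ Z, m Z X Y := by
  have h1 : m (eR X) Y (s Y) := by
    rw [hXY]
    have := zLemA' hG hR (s Y)
    rwa [hG.1 Y] at this
  obtain ⟨u, hu1, _⟩ := (hG.2.1 X Y (s Y) X).mpr ⟨eR X, h1, (hR X).2⟩
  exact ⟨u, hu1⟩

theorem zLemH (hG : IsZGroupoid m E s) (hR : ∀ x, eR x ∈ E ∧ m x x (eR x))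
    {Z X W : Γ} (hZ : Z ∈ E) (hm : m Z X W) : X = s W := by
  have hW : eR W = Z := by
    have := zLemC hG hR hm
    rw [zLemD hG hR hZ] at this
    exact this.symm
  have h1 : m W W Z := hW ▸ (hR W).2
  have h2 : m (s W) Z (s W) := by
    refine (hG.2.2.2.2.1 W Z (s W)).mpr ?_
    rw [hG.1 W, zLemG hG hR hZ]
    exact h1
  obtain ⟨v, hv1, hv2⟩ := (hG.2.1 X W (s W) (s W)).mp ⟨Z, hm, h2⟩
  have hv : v = eR (s W) := by
    refine zLemA hG hR (s W) v ?_
    rw [hG.1 W]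
    exact hv1
  refine ((hG.2.2.2.1 (s W) X).mp ⟨v, ?_, hv2⟩).symm
  rw [hv]; exact (hR (s W)).1

end ZHelp

theorem zAuxR {Γ Γ' : Type*}
    {m : Γ → Γ → Γ → Prop} {E : Set Γ} {s : Γ → Γ} (hG : IsZGroupoid m E s)
    {m' : Γ' → Γ' → Γ' → Prop} {E' : Set Γ'} {s' : Γ' → Γ'} (hG' : IsZGroupoid m' E' s')
    {eR : Γ → Γ} (hR : ∀ x, eR x ∈ E ∧ m x x (eR x))
    {eR' : Γ' → Γ'} (hR' : ∀ y, eR' y ∈ E' ∧ m' y y (eR' y))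
    {h : Γ' → Γ → Prop} (hmor : IsZMorphism m E s m' E' s' h)
    {b : Γ'} {a : Γ} (hb : b ∈ E') (hba : h b a) :
    ∀ x, eR x = a → ∃! y, eR' y = b ∧ h y x := by
  obtain ⟨hm1, hm2, hm3⟩ := hmor
  intro x hx
  have hax : m a (s x) x := hx ▸ zLemA' hG hR x
  obtain ⟨y₁, y₂, hy1, hy2, hmb⟩ := (hm1 b (s x) x).mp ⟨a, hax, hba⟩
  have hy2b : eR' y₂ = b := by
    have := zLemC hG' hR' hmb
    rw [zLemD hG' hR' hb] at this
    exact this.symm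
  refine ⟨y₂, ⟨hy2b, hy2⟩, ?_⟩
  rintro y ⟨hyb, hyx⟩
  obtain ⟨Y, hY⟩ := zLemE hG' hR' (X := y) (Y := s' y₂)
    (by rw [hG'.1 y₂, hyb, hy2b])
  have hsy2 : h (s' y₂) (s x) := by
    refine (hm2 (s' y₂) x).mpr ?_
    rw [hG'.1 y₂]
    exact hy2
  obtain ⟨x₀, hx₀m, hx₀h⟩ := (hm1 Y x (s x)).mpr ⟨y, s' y₂, hyx, hsy2, hY⟩
  have hx₀ : x₀ = eR (s x) := by
    refine zLemA hG hR (s x) x₀ ?_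
    rw [hG.1 x]
    exact hx₀m
  have hYE : Y ∈ E' := by
    rw [← hm3]
    exact ⟨x₀, by rw [hx₀]; exact (hR (s x)).1, hx₀h⟩
  have := zLemH hG' hR' hYE hY
  rwa [hG'.1 y₂] at this

theorem zSwapG {Γ : Type*} {m : Γ → Γ → Γ → Prop} {E : Set Γ} {s : Γ → Γ}
    (hG : IsZGroupoid m E s) : IsZGroupoid (fun z x y => m z y x) E s := by
  obtain ⟨hs, hassoc, hidL, hidR, hinv, hpe, hpE⟩ := hG
  refine ⟨hs, fun x y w z => (hassoc w y x z).symm, hidR, hidL,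
    fun z x y => hinv z y x, ?_, ?_⟩
  · intro x
    have := hpe (s x)
    rwa [hs x] at this
  · intro x z hz
    refine hpE (s x) z ?_
    rw [hs x]
    exact hz

theorem zSwapM {Γ Γ' : Type*} {m : Γ → Γ → Γ → Prop} {E : Set Γ} {s : Γ → Γ}
    {m' : Γ' → Γ' → Γ' → Prop} {E' : Set Γ'} {s' : Γ' → Γ'} {h : Γ' → Γ → Prop}
    (hmor : IsZMorphism m E s m' E' s' h) :
    IsZMorphism (fun z x y => m z y x) E s (fun z x y => m' z y x) E' s' h := by
  obtain ⟨hm1, hm2, hm3⟩ := hmor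
  refine ⟨fun y' x₁ x₂ => ?_, hm2, hm3⟩
  rw [hm1 y' x₂ x₁]
  constructor
  · rintro ⟨y₁, y₂, h1, h2, h3⟩
    exact ⟨y₂, y₁, h2, h1, h3⟩
  · rintro ⟨y₁, y₂, h1, h2, h3⟩
    exact ⟨y₂, y₁, h2, h1, h3⟩

/-- For a morphism `h`, `b ∈ E'` and `a := f_h(b)` the unique element of `E` with
`(b, a) ∈ Gr(h)`: for every `x` with `e_R(x) = a` there is exactly one `y` with
`e'_R(y) = b` and `(y, x) ∈ Gr(h)` (so `h_b^R : F_r(a) → F_r(b)` is a mapping),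
and likewise for left fibers. -/
theorem stmt7 {Γ Γ' : Type*}
    (m : Γ → Γ → Γ → Prop) (E : Set Γ) (s : Γ → Γ) (hG : IsZGroupoid m E s)
    (m' : Γ' → Γ' → Γ' → Prop) (E' : Set Γ') (s' : Γ' → Γ') (hG' : IsZGroupoid m' E' s')
    (eL eR : Γ → Γ)
    (hL : ∀ x, eL x ∈ E ∧ m x (eL x) x) (hR : ∀ x, eR x ∈ E ∧ m x x (eR x))
    (eL' eR' : Γ' → Γ')
    (hL' : ∀ y, eL' y ∈ E' ∧ m' y (eL' y) y) (hR' : ∀ y, eR' y ∈ E' ∧ m' y y (eR' y))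
    (h : Γ' → Γ → Prop) (hmor : IsZMorphism m E s m' E' s' h)
    (b : Γ') (a : Γ) (hb : b ∈ E') (ha : a ∈ E) (hba : h b a) :
    (∀ x, eR x = a → ∃! y, eR' y = b ∧ h y x) ∧
    (∀ x, eL x = a → ∃! y, eL' y = b ∧ h y x) := by
  refine ⟨zAuxR hG hG' hR hR' hmor hb hba, ?_⟩
  exact zAuxR (zSwapG hG) (zSwapG hG') hL hL' (zSwapM hmor) hb hba
end

section
/- Let h : Γ → Γ' be a morphism of groupoids, let f := f_h : E' → E, and for (x, e') ∈ Γ ×_f E' let g(x, e') := h_{e'}^R(x) be the unique y ∈ Γ' with (y, x) ∈ Gr(h) and e'_R(y) = e'. Then f and g satisfy conditions (a)–(d), and Gr(h) = {(g(x, e'), x) : (x, e') ∈ Γ ×_f E'}. -/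
structure ZFacts {Γ : Type*} (m : Γ → Γ → Γ → Prop) (E : Set Γ) (s : Γ → Γ)
    (eL eR : Γ → Γ) : Prop where
  ss : ∀ x, s (s x) = x
  P : ∀ x, m (eR x) (s x) x
  Puniq : ∀ x z, m z (s x) x → z = eR x
  sid : ∀ a ∈ E, s a = a
  eRid : ∀ a ∈ E, eR a = a
  eLid : ∀ a ∈ E, eL a = a
  RU : ∀ x b, m x x b → b ∈ E → b = eR x
  LU : ∀ x a, m x a x → a ∈ E → a = eL x
  eLs : ∀ x, eL x = eR (s x)
  compatR : ∀ z x y, m z x y → eR z = eR y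
  compatL : ∀ z x y, m z x y → eL z = eL x
  bonus : ∀ z x y, m z x y → m y (s x) z
  compatM : ∀ z x y, m z x y → eR x = eL y
  uniq : ∀ z z' x y, m z x y → m z' x y → z = z'
  idL : ∀ z a x, a ∈ E → m z a x → z = x
  idR : ∀ z x a, a ∈ E → m z x a → z = x
  exR : ∀ x, m x x (eR x)
  exL : ∀ x, m x (eL x) x
  ERE : ∀ x, eR x ∈ E
  ELE : ∀ x, eL x ∈ E

theorem mkZFacts {Γ : Type*} {m : Γ → Γ → Γ → Prop} {E : Set Γ} {s : Γ → Γ}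
    {eL eR : Γ → Γ} (hG : IsZGroupoid m E s)
    (hL : ∀ x, eL x ∈ E ∧ m x (eL x) x) (hR : ∀ x, eR x ∈ E ∧ m x x (eR x)) :
    ZFacts m E s eL eR := by
  obtain ⟨hss, hassoc, hidL, hidR, hinv, hpos, hposE⟩ := hG
  have idL : ∀ z a x, a ∈ E → m z a x → z = x :=
    fun z a x ha hm => (hidL z x).mp ⟨a, ha, hm⟩
  have idR : ∀ z x a, a ∈ E → m z x a → z = x :=
    fun z x a ha hm => (hidR z x).mp ⟨a, ha, hm⟩
  have Puniq : ∀ x z, m z (s x) x → z = eR x := by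
    intro x z hz
    obtain ⟨u, hu1, hu2⟩ := (hassoc (s x) x (eR x) z).mpr ⟨x, (hR x).2, hz⟩
    exact idL z u (eR x) (hposE x u hu1) hu2
  have P : ∀ x, m (eR x) (s x) x := by
    intro x; obtain ⟨z₀, hz₀⟩ := hpos x
    have hzz := Puniq x z₀ hz₀; rwa [hzz] at hz₀
  have seR : ∀ x, s (eR x) = eR x := by
    intro x
    have h2 : m (s (eR x)) (s x) (s (s x)) :=
      (hinv (s (eR x)) (s x) x).mp (by rw [hss]; exact P x)
    rw [hss] at h2
    exact Puniq x _ h2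
  have sid : ∀ a ∈ E, s a = a := by
    intro a ha
    have h1 : m (eR (s a)) (s (s a)) (s a) := P (s a)
    rw [hss] at h1
    have h2 : eR (s a) = s a := idL _ a _ ha h1
    have h3 := seR (s a)
    rw [h2, hss] at h3
    exact h3.symm
  have eRid : ∀ a ∈ E, eR a = a := by
    intro a ha
    have h1 := P a; rw [sid a ha] at h1; exact idL _ a _ ha h1
  have RU : ∀ x b, m x x b → b ∈ E → b = eR x := by
    intro x b hxb hb
    obtain ⟨u, hu1, hu2⟩ := (hassoc (s x) x b (eR x)).mpr ⟨x, hxb, P x⟩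
    rw [Puniq x u hu1] at hu2
    exact (idL (eR x) (eR x) b (hR x).1 hu2).symm
  have aux : ∀ x a, m x a x → a ∈ E → a = eR (s x) := by
    intro x a hax ha
    have h0 : m (s (s x)) a x := by rw [hss]; exact hax
    have h1 := (hinv (s x) a x).mp h0
    rw [sid a ha] at h1
    exact RU (s x) a h1 ha
  have eLs : ∀ x, eL x = eR (s x) := fun x => aux x (eL x) (hL x).2 (hL x).1
  have LU : ∀ x a, m x a x → a ∈ E → a = eL x :=
    fun x a hax ha => (aux x a hax ha).trans (eLs x).symm
  have eLid : ∀ a ∈ E, eL a = a := by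
    intro a ha
    have h1 : m a a a := by have h2 := (hR a).2; rwa [eRid a ha] at h2
    exact (LU a a h1 ha).symm
  have compatR : ∀ z x y, m z x y → eR z = eR y := by
    intro z x y hz
    obtain ⟨u, hu1, hu2⟩ := (hassoc x y (eR y) z).mpr ⟨y, (hR y).2, hz⟩
    have hzu : z = u := idR z u (eR y) (hR y).1 hu2
    rw [← hzu] at hu2
    exact (RU z (eR y) hu2 (hR y).1).symm
  have compatL : ∀ z x y, m z x y → eL z = eL x := by
    intro z x y hz
    obtain ⟨v, hv1, hv2⟩ := (hassoc (eL x) x y z).mp ⟨x, (hL x).2, hz⟩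
    have hzv : z = v := idL z (eL x) v (hL x).1 hv2
    rw [← hzv] at hv2
    exact (LU z (eL x) hv2 (hL x).1).symm
  have exQ : ∀ x, m (eL x) x (s x) := by
    intro x
    have h1 := P (s x); rw [hss] at h1; rw [eLs]; exact h1
  have bonusM : ∀ z x y, m z x y → m y (s x) z ∧ eR x = eL y := by
    intro z x y hz
    have lhs1 : ∃ u, m u x (s x) ∧ m z u z := by
      refine ⟨eL x, exQ x, ?_⟩
      have h2 := (hL z).2; rwa [compatL z x y hz] at h2
    obtain ⟨v₁, hv₁, hv₁'⟩ := (hassoc x (s x) z z).mp lhs1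
    obtain ⟨u, hu1, hu2⟩ := (hassoc (s x) x y v₁).mpr ⟨z, hz, hv₁⟩
    rw [Puniq x u hu1] at hu2
    have hv₁y : v₁ = y := idL v₁ (eR x) y (hR x).1 hu2
    rw [hv₁y] at hv₁ hu2
    exact ⟨hv₁, LU y (eR x) hu2 (hR x).1⟩
  have uniq : ∀ z z' x y, m z x y → m z' x y → z = z' := by
    intro z z' x y hz hz'
    have hb := (bonusM z x y hz).1
    obtain ⟨u, hu1, hu2⟩ := (hassoc x (s x) z z').mpr ⟨y, hb, hz'⟩
    have hu : u = eR (s x) := Puniq (s x) u (by rw [hss]; exact hu1)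
    have huE : u ∈ E := hu ▸ (hR (s x)).1
    exact (idL z' u z huE hu2).symm
  exact ⟨hss, P, Puniq, sid, eRid, eLid, RU, LU, eLs, compatR, compatL,
    fun z x y hz => (bonusM z x y hz).1, fun z x y hz => (bonusM z x y hz).2,
    uniq, idL, idR, fun x => (hR x).2, fun x => (hL x).2,
    fun x => (hR x).1, fun x => (hL x).1⟩

/-- Conversely, a morphism `h : Γ → Γ'` determines `f := f_h` and
`g(x, e') := h_{e'}^R(x)` satisfying conditions (a)–(d), and
`Gr(h) = {(g(x, e'), x) : (x, e') ∈ Γ ×_f E'}`. -/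
theorem stmt9 {Γ Γ' : Type*}
    (m : Γ → Γ → Γ → Prop) (E : Set Γ) (s : Γ → Γ) (hG : IsZGroupoid m E s)
    (m' : Γ' → Γ' → Γ' → Prop) (E' : Set Γ') (s' : Γ' → Γ') (hG' : IsZGroupoid m' E' s')
    (eL eR : Γ → Γ)
    (hL : ∀ x, eL x ∈ E ∧ m x (eL x) x) (hR : ∀ x, eR x ∈ E ∧ m x x (eR x))
    (eL' eR' : Γ' → Γ')
    (hL' : ∀ y, eL' y ∈ E' ∧ m' y (eL' y) y) (hR' : ∀ y, eR' y ∈ E' ∧ m' y y (eR' y))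
    (mul : Γ → Γ → Γ) (hmul : ∀ x y, eR x = eL y → m (mul x y) x y)
    (mul' : Γ' → Γ' → Γ') (hmul' : ∀ x y, eR' x = eL' y → m' (mul' x y) x y)
    (h : Γ' → Γ → Prop) (hmor : IsZMorphism m E s m' E' s' h)
    (fh : Γ' → Γ) (hfh : ∀ b ∈ E', fh b ∈ E ∧ h b (fh b))
    (g : Γ → Γ' → Γ')
    (hg : ∀ x e', e' ∈ E' → eR x = fh e' → h (g x e') x ∧ eR' (g x e') = e') :
    (∀ x, (∃ e' ∈ E', eR x = fh e') → ∃ e'' ∈ E', eL x = fh e'') ∧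
    (∀ x e', e' ∈ E' → eR x = fh e' → eR' (g x e') = e') ∧
    (∀ x e', e' ∈ E' → eR x = fh e' →
        eR (s x) = fh (eL' (g x e')) ∧ s' (g x e') = g (s x) (eL' (g x e'))) ∧
    (∀ x e' x₁, e' ∈ E' → eR x = fh e' → eR x₁ = eL x →
        g (mul x₁ x) e' = mul' (g x₁ (eL' (g x e'))) (g x e')) ∧
    (∀ y x, h y x ↔ ∃ e' ∈ E', eR x = fh e' ∧ y = g x e') := by
  have F := mkZFacts hG hL hR
  have F' := mkZFacts hG' hL' hR'
  obtain ⟨hm1, hm2, hm3⟩ := hmor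
  have memE' : ∀ y', (∃ a ∈ E, h y' a) ↔ y' ∈ E' := fun y' => Set.ext_iff.mp hm3 y'
  have hs' : ∀ y x, h y x → h (s' y) (s x) := by
    intro y x hyx
    have h1 := hm2 (s' y) x
    rw [F'.ss] at h1
    exact h1.mpr hyx
  have M1 : ∀ y x, h y x → h (eR' y) (eR x) := by
    intro y x hyx
    obtain ⟨y₁, y₂, hy₁, hy₂, hmm⟩ := (hm1 y x (eR x)).mp ⟨x, F.exR x, hyx⟩
    have hy₂E : y₂ ∈ E' := (memE' y₂).mp ⟨eR x, F.ERE x, hy₂⟩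
    have hyy : y = y₁ := F'.idR y y₁ y₂ hy₂E hmm
    rw [← hyy] at hmm
    have he : y₂ = eR' y := F'.RU y y₂ hmm hy₂E
    rw [← he]; exact hy₂
  have M2 : ∀ y x, h y x → h (eL' y) (eL x) := by
    intro y x hyx
    obtain ⟨y₁, y₂, hy₁, hy₂, hmm⟩ := (hm1 y (eL x) x).mp ⟨x, F.exL x, hyx⟩
    have hy₁E : y₁ ∈ E' := (memE' y₁).mp ⟨eL x, F.ELE x, hy₁⟩
    have hyy : y = y₂ := F'.idL y y₁ y₂ hy₁E hmm
    rw [← hyy] at hmm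
    have he : y₁ = eL' y := F'.LU y y₁ hmm hy₁E
    rw [← he]; exact hy₁
  have M3 : ∀ b a, b ∈ E' → a ∈ E → h b a → a = fh b := by
    intro b a hb ha hba
    obtain ⟨hfE, hfb⟩ := hfh b hb
    have hbbb : m' b b b := by
      have h2 := F'.exR b; rwa [F'.eRid b hb] at h2
    obtain ⟨x, hx, hbx⟩ := (hm1 b a (fh b)).mpr ⟨b, b, hba, hfb, hbbb⟩
    have h1 : x = fh b := F.idL x a (fh b) ha hx
    have h2 : x = a := F.idR x a (fh b) hfE hx
    exact h2.symm.trans h1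
  have M4 : ∀ y x, h y x → eR x = fh (eR' y) :=
    fun y x hyx => M3 (eR' y) (eR x) (F'.ERE y) (F.ERE x) (M1 y x hyx)
  have M5 : ∀ y x, h y x → eL x = fh (eL' y) :=
    fun y x hyx => M3 (eL' y) (eL x) (F'.ELE y) (F.ELE x) (M2 y x hyx)
  have M6 : ∀ y z x, h y x → h z x → eR' y = eR' z → y = z := by
    intro y z x hy hz he
    have hsz : h (s' z) (s x) := hs' z x hz
    have hcomp : eR' y = eL' (s' z) := by
      rw [he, F'.eLs (s' z), F'.ss]
    have hv : m' (mul' y (s' z)) y (s' z) := hmul' y (s' z) hcomp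
    obtain ⟨x', hx', hvx'⟩ := (hm1 (mul' y (s' z)) x (s x)).mpr ⟨y, s' z, hy, hsz, hv⟩
    have hx'eq : x' = eR (s x) := F.Puniq (s x) x' (by rw [F.ss]; exact hx')
    have hx'E : x' ∈ E := hx'eq ▸ F.ERE (s x)
    have hvE : mul' y (s' z) ∈ E' := (memE' _).mp ⟨x', hx'E, hvx'⟩
    have hveq : mul' y (s' z) = eL' y := by
      have h2 := F'.compatL (mul' y (s' z)) y (s' z) hv
      rwa [F'.eLid _ hvE] at h2
    obtain ⟨hss', hassoc', _, _, _, _, _⟩ := hG'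
    have hrhs : ∃ v', m' v' (s' z) z ∧ m' y y v' :=
      ⟨eR' z, F'.P z, by rw [← he]; exact F'.exR y⟩
    obtain ⟨u, hu1, hu2⟩ := (hassoc' y (s' z) z y).mpr hrhs
    have hueq : u = eL' y := F'.uniq u (eL' y) y (s' z) hu1 (hveq ▸ hv)
    rw [hueq] at hu2
    exact F'.idL y (eL' y) z (F'.ELE y) hu2
  have M7 : ∀ y x, h y x → y = g x (eR' y) := by
    intro y x hy
    obtain ⟨hg1, hg2⟩ := hg x (eR' y) (F'.ERE y) (M4 y x hy)
    exact M6 y (g x (eR' y)) x hy hg1 hg2.symm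
  refine ⟨?_, fun x e' h1 h2 => (hg x e' h1 h2).2, ?_, ?_, ?_⟩
  · rintro x ⟨e', he', hef⟩
    obtain ⟨hg1, _⟩ := hg x e' he' hef
    exact ⟨eL' (g x e'), F'.ELE _, M5 _ x hg1⟩
  · intro x e' he' hef
    obtain ⟨hg1, hg2⟩ := hg x e' he' hef
    have hsy : h (s' (g x e')) (s x) := hs' _ x hg1
    constructor
    · have h4 := M4 (s' (g x e')) (s x) hsy
      rwa [← F'.eLs] at h4
    · have h7 := M7 (s' (g x e')) (s x) hsy
      rwa [← F'.eLs] at h7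
  · intro x e' x₁ he' hef h1
    obtain ⟨hgx, hgxe⟩ := hg x e' he' hef
    have hfx1 : eR x₁ = fh (eL' (g x e')) := by rw [h1]; exact M5 (g x e') x hgx
    obtain ⟨hgy1, hgy1e⟩ := hg x₁ (eL' (g x e')) (F'.ELE (g x e')) hfx1
    have hmx : m (mul x₁ x) x₁ x := hmul x₁ x h1
    have hmy : m' (mul' (g x₁ (eL' (g x e'))) (g x e')) (g x₁ (eL' (g x e'))) (g x e') :=
      hmul' _ _ hgy1e
    obtain ⟨x', hx', hhx'⟩ :=
      (hm1 (mul' (g x₁ (eL' (g x e'))) (g x e')) x₁ x).mpr ⟨_, _, hgy1, hgx, hmy⟩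
    have hxeq : x' = mul x₁ x := F.uniq x' (mul x₁ x) x₁ x hx' hmx
    rw [hxeq] at hhx'
    have h7 := M7 _ _ hhx'
    have hRe : eR' (mul' (g x₁ (eL' (g x e'))) (g x e')) = e' :=
      (F'.compatR _ _ _ hmy).trans hgxe
    rw [hRe] at h7
    exact h7.symm
  · intro y x
    constructor
    · intro hyx
      exact ⟨eR' y, F'.ERE y, M4 y x hyx, M7 y x hyx⟩
    · rintro ⟨e', he', hef, rfl⟩
      exact (hg x e' he' hef).1
end

section
/- Let (Γ, m, E, s) and (Γ', m', E', s') be groupoids, f : E' → E a map and g : Γ ×_f E' → Γ' a map satisfying conditions (a)–(d). Set Γ̃ := Γ ×_f E', Ẽ := {(a, b) ∈ E × E' : a = f(b)}, s̃(x, b) := (s(x), e'_L(g(x, b))), and let m̃ be the relation with Gr(m̃) := {((x₁·x₂, b₂); (x₁, e'_L(g(x₂, b₂))), (x₂, b₂)) : e_R(x₁) = e_L(x₂), (x₂, b₂) ∈ Γ̃}. Then (Γ̃, m̃, Ẽ, s̃) is a groupoid in the sense of Zakrzewski. -/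
namespace ZAux

structure ZD {Γ : Type*} (m : Γ → Γ → Γ → Prop) (E : Set Γ) (s : Γ → Γ)
    (eL eR : Γ → Γ) (mul : Γ → Γ → Γ) : Prop where
  sinv : ∀ x, s (s x) = x
  assoc : ∀ x y w z, (∃ u, m u x y ∧ m z u w) ↔ (∃ v, m v y w ∧ m z x v)
  idl : ∀ z x, (∃ a ∈ E, m z a x) ↔ z = x
  idr : ∀ z x, (∃ a ∈ E, m z x a) ↔ z = x
  inv : ∀ z x y, m (s z) x y ↔ m z (s y) (s x)
  pos₁ : ∀ x, ∃ z, m z (s x) x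
  pos₂ : ∀ x z, m z (s x) x → z ∈ E
  memL : ∀ x, eL x ∈ E ∧ m x (eL x) x
  memR : ∀ x, eR x ∈ E ∧ m x x (eR x)
  hmul : ∀ x y, eR x = eL y → m (mul x y) x y

namespace ZD

variable {Γ : Type*} {m : Γ → Γ → Γ → Prop} {E : Set Γ} {s : Γ → Γ}
  {eL eR : Γ → Γ} {mul : Γ → Γ → Γ} (h : ZD m E s eL eR mul)

include h

lemma memE {a : Γ} (ha : a ∈ E) : m a a a := by
  obtain ⟨b, hb, hm⟩ := (h.idl a a).mpr rfl
  have hab : a = b := (h.idr a b).mp ⟨a, ha, hm⟩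
  rwa [← hab] at hm

lemma uniqL {b c x : Γ} (hb : b ∈ E) (hc : c ∈ E) (hmb : m x b x) (hmc : m x c x) :
    b = c := by
  obtain ⟨u, hu1, _⟩ := (h.assoc b c x x).mpr ⟨x, hmc, hmb⟩
  have h1 : u = c := (h.idl u c).mp ⟨b, hb, hu1⟩
  have h2 : u = b := (h.idr u b).mp ⟨c, hc, hu1⟩
  rw [← h1, h2]

lemma uniqR {b c x : Γ} (hb : b ∈ E) (hc : c ∈ E) (hmb : m x x b) (hmc : m x x c) :
    b = c := by
  obtain ⟨v, hv1, _⟩ := (h.assoc x b c x).mp ⟨x, hmb, hmc⟩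
  have h1 : v = c := (h.idl v c).mp ⟨b, hb, hv1⟩
  have h2 : v = b := (h.idr v b).mp ⟨c, hc, hv1⟩
  rw [← h2, h1]

lemma eL_eq {b x : Γ} (hb : b ∈ E) (hm : m x b x) : eL x = b :=
  h.uniqL (h.memL x).1 hb (h.memL x).2 hm

lemma eR_eq {b x : Γ} (hb : b ∈ E) (hm : m x x b) : eR x = b :=
  h.uniqR (h.memR x).1 hb (h.memR x).2 hm

lemma eL_id {a : Γ} (ha : a ∈ E) : eL a = a := h.eL_eq ha (h.memE ha)

lemma eR_id {a : Γ} (ha : a ∈ E) : eR a = a := h.eR_eq ha (h.memE ha)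

lemma compat {z x y : Γ} (hz : m z x y) : eR x = eL y := by
  obtain ⟨v, hv1, _⟩ := (h.assoc x (eR x) y z).mp ⟨x, (h.memR x).2, hz⟩
  have hv : v = y := (h.idl v y).mp ⟨eR x, (h.memR x).1, hv1⟩
  rw [hv] at hv1
  exact (h.eL_eq (h.memR x).1 hv1).symm

lemma eL_prod {z x y : Γ} (hz : m z x y) : eL z = eL x := by
  obtain ⟨v, hv1, hv2⟩ := (h.assoc (eL x) x y z).mp ⟨x, (h.memL x).2, hz⟩
  have hv : z = v := (h.idl z v).mp ⟨eL x, (h.memL x).1, hv2⟩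
  rw [← hv] at hv2
  exact h.eL_eq (h.memL x).1 hv2

lemma eR_prod {z x y : Γ} (hz : m z x y) : eR z = eR y := by
  obtain ⟨u, hu1, hu2⟩ := (h.assoc x y (eR y) z).mpr ⟨y, (h.memR y).2, hz⟩
  have hu : z = u := (h.idr z u).mp ⟨eR y, (h.memR y).1, hu2⟩
  rw [← hu] at hu2
  exact h.eR_eq (h.memR y).1 hu2

lemma eLs (x : Γ) : eL (s x) = eR x := by
  obtain ⟨w, hw⟩ := h.pos₁ (s x)
  rw [h.sinv] at hw
  exact (h.compat hw).symm

lemma eRs (x : Γ) : eR (s x) = eL x := by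
  obtain ⟨w, hw⟩ := h.pos₁ x
  exact h.compat hw

lemma posR (x : Γ) : m (eR x) (s x) x := by
  obtain ⟨w, hw⟩ := h.pos₁ x
  have hwE : w ∈ E := h.pos₂ x w hw
  have : eR x = w := by rw [← h.eR_prod hw, h.eR_id hwE]
  rwa [this]

lemma posL (x : Γ) : m (eL x) x (s x) := by
  obtain ⟨w, hw⟩ := h.pos₁ (s x)
  have hwE : w ∈ E := h.pos₂ (s x) w hw
  rw [h.sinv] at hw
  have : eL x = w := by rw [← h.eL_prod hw, h.eL_id hwE]
  rwa [this]

lemma sE {a : Γ} (ha : a ∈ E) : s a = a := by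
  have hw := h.posR a
  rw [h.eR_id ha] at hw
  exact ((h.idr a (s a)).mp ⟨a, ha, hw⟩).symm

lemma mulInv {z x y : Γ} (hz : m z x y) : m x z (s y) := by
  have hp : m (mul z (s y)) z (s y) :=
    h.hmul z (s y) (by rw [h.eR_prod hz, ← h.eLs y])
  obtain ⟨v, hv1, hv2⟩ := (h.assoc x y (s y) (mul z (s y))).mp ⟨z, hz, hp⟩
  have hvE : v ∈ E := h.pos₂ (s y) v (by rw [h.sinv]; exact hv1)
  have hveq : v = eR x := by
    rw [← h.eL_id hvE, h.eL_prod hv1, ← h.compat hz]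
  rw [hveq] at hv2
  have : mul z (s y) = x := (h.idr (mul z (s y)) x).mp ⟨eR x, (h.memR x).1, hv2⟩
  rwa [this] at hp

lemma muniq {z z' x y : Γ} (hz : m z x y) (hz' : m z' x y) : z = z' := by
  have hx : m x z (s y) := h.mulInv hz
  obtain ⟨v, hv1, hv2⟩ := (h.assoc z (s y) y z').mp ⟨x, hx, hz'⟩
  have hvE : v ∈ E := h.pos₂ y v hv1
  have hveq : v = eR z := by
    rw [← h.eL_id hvE, h.eL_prod hv1, h.eLs y, ← h.eR_prod hz]
  rw [hveq] at hv2
  exact ((h.idr z' z).mp ⟨eR z, (h.memR z).1, hv2⟩).symm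

lemma mul_eq {z x y : Γ} (hz : m z x y) : mul x y = z :=
  h.muniq (h.hmul x y (h.compat hz)) hz

lemma s_prod {z x y : Γ} (hz : m z x y) : m (s z) (s y) (s x) := by
  rw [h.inv, h.sinv, h.sinv]; exact hz

end ZD
end ZAux

/-- Given `f : E' → E` and `g` satisfying conditions (a)–(d), the set
`Γ̃ := Γ ×_f E'` with the multiplication `m̃`, identities `Ẽ` and inverse `s̃`
described in the paper is a groupoid in the sense of Zakrzewski. -/
theorem stmt10 {Γ Γ' : Type*}
    (m : Γ → Γ → Γ → Prop) (E : Set Γ) (s : Γ → Γ) (hG : IsZGroupoid m E s)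
    (m' : Γ' → Γ' → Γ' → Prop) (E' : Set Γ') (s' : Γ' → Γ') (hG' : IsZGroupoid m' E' s')
    (eL eR : Γ → Γ)
    (hL : ∀ x, eL x ∈ E ∧ m x (eL x) x) (hR : ∀ x, eR x ∈ E ∧ m x x (eR x))
    (eL' eR' : Γ' → Γ')
    (hL' : ∀ y, eL' y ∈ E' ∧ m' y (eL' y) y) (hR' : ∀ y, eR' y ∈ E' ∧ m' y y (eR' y))
    (mul : Γ → Γ → Γ) (hmul : ∀ x y, eR x = eL y → m (mul x y) x y)
    (mul' : Γ' → Γ' → Γ') (hmul' : ∀ x y, eR' x = eL' y → m' (mul' x y) x y)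
    (f : Γ' → Γ) (hf : ∀ e' ∈ E', f e' ∈ E)
    (g : Γ → Γ' → Γ')
    (hga : ∀ x, (∃ e' ∈ E', eR x = f e') → ∃ e'' ∈ E', eL x = f e'')
    (hgb : ∀ x e', e' ∈ E' → eR x = f e' → eR' (g x e') = e')
    (hgc : ∀ x e', e' ∈ E' → eR x = f e' →
        eR (s x) = f (eL' (g x e')) ∧ s' (g x e') = g (s x) (eL' (g x e')))
    (hgd : ∀ x e' x₁, e' ∈ E' → eR x = f e' → eR x₁ = eL x →
        g (mul x₁ x) e' = mul' (g x₁ (eL' (g x e'))) (g x e'))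
    (stilde : {p : Γ × Γ' // p.2 ∈ E' ∧ eR p.1 = f p.2} →
              {p : Γ × Γ' // p.2 ∈ E' ∧ eR p.1 = f p.2})
    (hstilde : ∀ p, ((stilde p).1.1 = s p.1.1 ∧ (stilde p).1.2 = eL' (g p.1.1 p.1.2))) :
    IsZGroupoid
      (fun z p q : {p : Γ × Γ' // p.2 ∈ E' ∧ eR p.1 = f p.2} =>
        eR p.1.1 = eL q.1.1 ∧ p.1.2 = eL' (g q.1.1 q.1.2) ∧
          m z.1.1 p.1.1 q.1.1 ∧ z.1.2 = q.1.2)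
      {p : {p : Γ × Γ' // p.2 ∈ E' ∧ eR p.1 = f p.2} | p.1.1 ∈ E ∧ p.1.1 = f p.1.2}
      stilde := by
  obtain ⟨a1, a2, a3, a4, a5, a6, a7⟩ := hG
  obtain ⟨b1, b2, b3, b4, b5, b6, b7⟩ := hG'
  have hd : ZAux.ZD m E s eL eR mul := ⟨a1, a2, a3, a4, a5, a6, a7, hL, hR, hmul⟩
  have hd' : ZAux.ZD m' E' s' eL' eR' mul' := ⟨b1, b2, b3, b4, b5, b6, b7, hL', hR', hmul'⟩
  -- condition (c) rephrased: eL x = f (eL' (g x b))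
  have hgmem : ∀ x b, b ∈ E' → eR x = f b → eL x = f (eL' (g x b)) := by
    intro x b hb hx
    have := (hgc x b hb hx).1
    rwa [hd.eRs] at this
  -- eL' of g of a product
  have hgL : ∀ x b x₁, b ∈ E' → eR x = f b → eR x₁ = eL x →
      eL' (g (mul x₁ x) b) = eL' (g x₁ (eL' (g x b))) := by
    intro x b x₁ hb hx hx₁
    rw [hgd x b x₁ hb hx hx₁]
    exact hd'.eL_prod (hmul' _ _
      (hgb x₁ (eL' (g x b)) (hL' _).1 (hx₁.trans (hgmem x b hb hx))))
  -- g on identity pairs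
  have hgid : ∀ x b, b ∈ E' → eR x = f b → x ∈ E → g x b = b := by
    intro x b hb hx hxE
    set y := g x b with hy
    have hsy : s' y = g x (eL' y) := by
      have := (hgc x b hb hx).2
      rwa [hd.sE hxE] at this
    have hyy : y = mul' (s' y) y := by
      have h1 := hgd x b x hb hx (by rw [hd.eR_id hxE, hd.eL_id hxE])
      rw [hd.mul_eq (hd.memE hxE)] at h1
      rw [← hy, ← hsy] at h1
      exact h1
    have hm : m' y (s' y) y := by
      nth_rewrite 1 [hyy]
      exact hmul' (s' y) y (hd'.eRs y)
    have hyE : y ∈ E' := hd'.pos₂ y y hm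
    have h2 : eR' y = b := hgb x b hb hx
    rw [← h2, hd'.eR_id hyE]
  have hgidL : ∀ x b, b ∈ E' → eR x = f b → x ∈ E → eL' (g x b) = b := by
    intro x b hb hx hxE
    rw [hgid x b hb hx hxE, hd'.eL_id hb]
  -- involution identity for the second component
  have gsinv : ∀ x b, b ∈ E' → eR x = f b → eL' (g (s x) (eL' (g x b))) = b := by
    intro x b hb hx
    rw [← (hgc x b hb hx).2, hd'.eLs, hgb x b hb hx]
  have gkey : ∀ x c, c ∈ E' → eR (s x) = f c → eL' (g x (eL' (g (s x) c))) = c := by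
    intro x c hc hxc
    have h5 := (hgc (s x) c hc hxc).2
    rw [hd.sinv] at h5
    rw [← h5, hd'.eLs, hgb (s x) c hc hxc]
  refine ⟨?_, ?_, ?_, ?_, ?_, ?_, ?_⟩
  · -- involution
    intro p
    apply Subtype.ext
    apply Prod.ext
    · rw [(hstilde _).1, (hstilde p).1, hd.sinv]
    · rw [(hstilde _).2, (hstilde p).1, (hstilde p).2]
      exact gsinv p.1.1 p.1.2 p.2.1 p.2.2
  · -- associativity
    intro p q w z
    constructor
    · rintro ⟨u, ⟨h1, h2, h3, h4⟩, h5, h6, h7, h8⟩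
      have compat_qw : eR q.1.1 = eL w.1.1 := by rw [← hd.eR_prod h3]; exact h5
      have hmv : m (mul q.1.1 w.1.1) q.1.1 w.1.1 := hmul _ _ compat_qw
      refine ⟨⟨(mul q.1.1 w.1.1, w.1.2), w.2.1, by rw [hd.eR_prod hmv]; exact w.2.2⟩,
        ⟨compat_qw, h4.symm.trans h6, hmv, rfl⟩, ?_, ?_, ?_, h8⟩
      · show eR p.1.1 = eL (mul q.1.1 w.1.1)
        rw [hd.eL_prod hmv]; exact h1
      · show p.1.2 = eL' (g (mul q.1.1 w.1.1) w.1.2)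
        rw [hgL w.1.1 w.1.2 q.1.1 w.2.1 w.2.2 compat_qw, ← h6, h4]; exact h2
      · show m z.1.1 p.1.1 (mul q.1.1 w.1.1)
        obtain ⟨v', hv'1, hv'2⟩ := (hd.assoc p.1.1 q.1.1 w.1.1 z.1.1).mp ⟨u.1.1, h3, h7⟩
        rwa [hd.muniq hmv hv'1]
    · rintro ⟨v, ⟨h1, h2, h3, h4⟩, h5, h6, h7, h8⟩
      have compat_pq : eR p.1.1 = eL q.1.1 := by rw [hd.eL_prod h3] at h5; exact h5
      have hmu : m (mul p.1.1 q.1.1) p.1.1 q.1.1 := hmul _ _ compat_pq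
      have hv11 : v.1.1 = mul q.1.1 w.1.1 := (hd.mul_eq h3).symm
      refine ⟨⟨(mul p.1.1 q.1.1, q.1.2), q.2.1, by rw [hd.eR_prod hmu]; exact q.2.2⟩,
        ⟨compat_pq, ?_, hmu, rfl⟩, ?_, h2, ?_, h8.trans h4⟩
      · rw [h6, hv11, h4, hgL w.1.1 w.1.2 q.1.1 w.2.1 w.2.2 h1, ← h2]
      · show eR (mul p.1.1 q.1.1) = eL w.1.1
        rw [hd.eR_prod hmu]; exact h1
      · show m z.1.1 (mul p.1.1 q.1.1) w.1.1
        obtain ⟨u', hu'1, hu'2⟩ := (hd.assoc p.1.1 q.1.1 w.1.1 z.1.1).mpr ⟨v.1.1, h3, h7⟩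
        rwa [hd.muniq hmu hu'1]
  · -- left identity
    intro z p
    constructor
    · rintro ⟨a, ⟨haE, hafb⟩, h1, h2, h3, h4⟩
      exact Subtype.ext (Prod.ext ((hd.idl z.1.1 p.1.1).mp ⟨a.1.1, haE, h3⟩) h4)
    · rintro rfl
      refine ⟨⟨(eL z.1.1, eL' (g z.1.1 z.1.2)), (hL' _).1,
          by rw [hd.eR_id (hL z.1.1).1]; exact hgmem z.1.1 z.1.2 z.2.1 z.2.2⟩,
        ⟨(hL z.1.1).1, hgmem z.1.1 z.1.2 z.2.1 z.2.2⟩,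
        ?_, rfl, (hL z.1.1).2, rfl⟩
      show eR (eL z.1.1) = eL z.1.1
      exact hd.eR_id (hL z.1.1).1
  · -- right identity
    intro z p
    constructor
    · rintro ⟨a, ⟨haE, hafb⟩, h1, h2, h3, h4⟩
      have hap : a.1.2 = p.1.2 := by
        rw [h2, hgidL a.1.1 a.1.2 a.2.1 a.2.2 haE]
      exact Subtype.ext (Prod.ext ((hd.idr z.1.1 p.1.1).mp ⟨a.1.1, haE, h3⟩)
        (h4.trans hap))
    · rintro rfl
      refine ⟨⟨(eR z.1.1, z.1.2), z.2.1, by rw [hd.eR_id (hR z.1.1).1]; exact z.2.2⟩,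
        ⟨(hR z.1.1).1, z.2.2⟩, ?_, ?_, (hR z.1.1).2, rfl⟩
      · show eR z.1.1 = eL (eR z.1.1)
        exact (hd.eL_id (hR z.1.1).1).symm
      · show z.1.2 = eL' (g (eR z.1.1) z.1.2)
        rw [hgidL (eR z.1.1) z.1.2 z.2.1
          (by rw [hd.eR_id (hR z.1.1).1]; exact z.2.2) (hR z.1.1).1]
  · -- inverse
    intro z p q
    constructor
    · rintro ⟨h1, h2, h3, h4⟩
      rw [(hstilde z).1] at h3
      rw [(hstilde z).2] at h4
      refine ⟨?_, ?_, ?_, ?_⟩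
      · rw [(hstilde q).1, (hstilde p).1, hd.eRs, hd.eLs]; exact h1.symm
      · rw [(hstilde q).2, (hstilde p).1, (hstilde p).2,
          gsinv p.1.1 p.1.2 p.2.1 p.2.2]
        exact h2.symm
      · rw [(hstilde q).1, (hstilde p).1]
        exact (hd.inv z.1.1 p.1.1 q.1.1).mp h3
      · rw [(hstilde p).2]
        calc z.1.2 = eL' (g (s z.1.1) (eL' (g z.1.1 z.1.2))) :=
              (gsinv z.1.1 z.1.2 z.2.1 z.2.2).symm
          _ = eL' (g (s z.1.1) q.1.2) := by rw [h4]
          _ = eL' (g (mul p.1.1 q.1.1) q.1.2) := by rw [hd.mul_eq h3]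
          _ = eL' (g p.1.1 (eL' (g q.1.1 q.1.2))) :=
              hgL q.1.1 q.1.2 p.1.1 q.2.1 q.2.2 h1
          _ = eL' (g p.1.1 p.1.2) := by rw [← h2]
    · rintro ⟨h1, h2, h3, h4⟩
      rw [(hstilde q).1, (hstilde p).1, hd.eRs, hd.eLs] at h1
      rw [(hstilde q).2, (hstilde p).1, (hstilde p).2,
        gsinv p.1.1 p.1.2 p.2.1 p.2.2] at h2
      rw [(hstilde q).1, (hstilde p).1] at h3
      rw [(hstilde p).2] at h4
      have hms : m (s z.1.1) p.1.1 q.1.1 := (hd.inv z.1.1 p.1.1 q.1.1).mpr h3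
      have hszq : eR (s z.1.1) = f q.1.2 := by
        rw [hd.eR_prod hms]; exact q.2.2
      refine ⟨h1.symm, h2.symm, ?_, ?_⟩
      · rw [(hstilde z).1]; exact hms
      · rw [(hstilde z).2]
        have h4' : z.1.2 = eL' (g (s z.1.1) q.1.2) := by
          calc z.1.2 = eL' (g p.1.1 p.1.2) := h4
            _ = eL' (g p.1.1 (eL' (g q.1.1 q.1.2))) := by rw [← h2]
            _ = eL' (g (mul p.1.1 q.1.1) q.1.2) :=
              (hgL q.1.1 q.1.2 p.1.1 q.2.1 q.2.2 h1.symm).symm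
            _ = eL' (g (s z.1.1) q.1.2) := by rw [hd.mul_eq hms]
        rw [h4']
        exact gkey z.1.1 q.1.2 q.2.1 hszq
  · -- strong positivity: existence
    intro p
    refine ⟨⟨(eR p.1.1, p.1.2), p.2.1, by rw [hd.eR_id (hR p.1.1).1]; exact p.2.2⟩,
      ?_, (hstilde p).2, ?_, rfl⟩
    · rw [(hstilde p).1, hd.eRs]
    · show m (eR p.1.1) (stilde p).1.1 p.1.1
      rw [(hstilde p).1]
      exact hd.posR p.1.1
  · -- strong positivity: identities
    rintro p z ⟨h1, h2, h3, h4⟩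
    rw [(hstilde p).1] at h3
    have hzE : z.1.1 ∈ E := hd.pos₂ p.1.1 z.1.1 h3
    refine ⟨hzE, ?_⟩
    calc z.1.1 = eR z.1.1 := (hd.eR_id hzE).symm
      _ = eR p.1.1 := hd.eR_prod h3
      _ = f p.1.2 := p.2.2
      _ = f z.1.2 := by rw [← h4]
end

section
/- Let h : Γ → Γ' and k : Γ' → Γ'' be morphisms of groupoids. Then h and k have simple composition (for every (z, x) ∈ Gr(kh), where Gr(kh) := {(z, x) : ∃ y, (y, x) ∈ Gr(h) ∧ (z, y) ∈ Gr(k)}, the intermediate element y ∈ Γ' with (y, x) ∈ Gr(h) and (z, y) ∈ Gr(k) is unique), and the composed relation kh is a morphism of groupoids from Γ to Γ''. -/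
/-- In a Zakrzewski groupoid, if `z = x·y` then `y = x⁻¹·z`. -/
lemma zgroupoid_cancel {Γ : Type*} {m : Γ → Γ → Γ → Prop} {E : Set Γ} {s : Γ → Γ}
    (hG : IsZGroupoid m E s) {z x y : Γ} (hz : m z x y) : m y (s x) z := by
  obtain ⟨hs, hassoc, hidl, hidr, hinv, hpos, hposE⟩ := hG
  -- b : a left unit of y
  obtain ⟨b, hbE, hby⟩ := (hidl y y).mpr rfl
  -- m x x b : b is a right unit of x
  obtain ⟨u, hu1, hu2⟩ := (hassoc x b y z).mpr ⟨y, hby, hz⟩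
  have hux : u = x := (hidr u x).mp ⟨b, hbE, hu1⟩
  have hxxb : m x x b := hux ▸ hu1
  -- m b (s x) x
  obtain ⟨Z, hZ⟩ := hpos x
  have hZE : Z ∈ E := hposE x Z hZ
  obtain ⟨u', hu'1, hu'2⟩ := (hassoc (s x) x b Z).mpr ⟨x, hxxb, hZ⟩
  have hu'E : u' ∈ E := hposE x u' hu'1
  have hZb : Z = b := by
    have h1 : Z = b := (hidl Z b).mp ⟨u', hu'E, hu'2⟩
    exact h1
  have hbsx : m b (s x) x := hZb ▸ hZ
  -- get v with m v x y ∧ m y (s x) v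
  obtain ⟨v, hv1, hv2⟩ := (hassoc (s x) x y y).mp ⟨b, hbsx, hby⟩
  -- show z = v
  obtain ⟨u'', hu''1, hu''2⟩ := (hassoc x (s x) v z).mpr ⟨y, hv2, hz⟩
  have hu''E : u'' ∈ E := by
    apply hposE (s x)
    rwa [hs x]
  have hzv : z = v := (hidl z v).mp ⟨u'', hu''E, hu''2⟩
  rwa [← hzv] at hv2

/-- Morphisms `h : Γ → Γ'` and `k : Γ' → Γ''` have simple composition
(the intermediate element is unique) and `kh` is a morphism `Γ → Γ''`. -/
theorem stmt11 {Γ Γ' Γ'' : Type*}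
    (m : Γ → Γ → Γ → Prop) (E : Set Γ) (s : Γ → Γ) (hG : IsZGroupoid m E s)
    (m' : Γ' → Γ' → Γ' → Prop) (E' : Set Γ') (s' : Γ' → Γ') (hG' : IsZGroupoid m' E' s')
    (m'' : Γ'' → Γ'' → Γ'' → Prop) (E'' : Set Γ'') (s'' : Γ'' → Γ'')
    (hG'' : IsZGroupoid m'' E'' s'')
    (h : Γ' → Γ → Prop) (k : Γ'' → Γ' → Prop)
    (hh : IsZMorphism m E s m' E' s' h) (hk : IsZMorphism m' E' s' m'' E'' s'' k) :
    (∀ z x y₁ y₂, h y₁ x → k z y₁ → h y₂ x → k z y₂ → y₁ = y₂) ∧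
    IsZMorphism m E s m'' E'' s'' (fun z x => ∃ y, h y x ∧ k z y) := by
  obtain ⟨hh1, hh2, hh3⟩ := hh
  obtain ⟨hk1, hk2, hk3⟩ := hk
  -- basic facts
  have hsinv : ∀ x : Γ, s (s x) = x := hG.1
  have hs'inv : ∀ y : Γ', s' (s' y) = y := hG'.1
  have hs''inv : ∀ z : Γ'', s'' (s'' z) = z := hG''.1
  -- h y x → h (s' y) (s x)
  have hflip : ∀ y x, h y x → h (s' y) (s x) := by
    intro y x hy
    rw [hh2 (s' y) x, hs'inv y]; exact hy
  have kflip : ∀ z y, k z y → k (s'' z) (s' y) := by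
    intro z y hz
    rw [hk2 (s'' z) y, hs''inv z]; exact hz
  constructor
  · intro z x y₁ y₂ hy1 hkz1 hy2 hkz2
    -- w = z⁻¹·z, an identity of Γ''
    obtain ⟨w, hw⟩ := hG''.2.2.2.2.2.1 z
    -- produce p = y₁⁻¹·y₂ in Γ' with k w p
    obtain ⟨p, hp1, hp2⟩ :=
      (hk1 w (s' y₁) y₂).mpr ⟨s'' z, z, kflip z y₁ hkz1, hkz2, hw⟩
    -- via h, p lies over an identity of Γ, hence p ∈ E'
    obtain ⟨x0, hx01, hx02⟩ :=
      (hh1 p (s x) x).mpr ⟨s' y₁, y₂, hflip y₁ x hy1, hy2, hp1⟩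
    have hx0E : x0 ∈ E := hG.2.2.2.2.2.2 x x0 hx01
    have hpE' : p ∈ E' := by
      rw [← hh3]; exact ⟨x0, hx0E, hx02⟩
    -- m' p (s' y₁) y₂ with p ∈ E' forces y₂ = y₁
    have hcan : m' y₂ (s' (s' y₁)) p := zgroupoid_cancel hG' hp1
    rw [hs'inv y₁] at hcan
    exact ((hG'.2.2.2.1 y₂ y₁).mp ⟨p, hpE', hcan⟩).symm
  · refine ⟨?_, ?_, ?_⟩
    · intro z x₁ x₂
      constructor
      · rintro ⟨x, hx, y, hyx, hzy⟩
        obtain ⟨y₁, y₂, hy1, hy2, hm'⟩ := (hh1 y x₁ x₂).mp ⟨x, hx, hyx⟩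
        obtain ⟨z₁, z₂, hz1, hz2, hm''⟩ := (hk1 z y₁ y₂).mp ⟨y, hm', hzy⟩
        exact ⟨z₁, z₂, ⟨y₁, hy1, hz1⟩, ⟨y₂, hy2, hz2⟩, hm''⟩
      · rintro ⟨z₁, z₂, ⟨y₁, hy1, hz1⟩, ⟨y₂, hy2, hz2⟩, hm''⟩
        obtain ⟨y, hm', hzy⟩ := (hk1 z y₁ y₂).mpr ⟨z₁, z₂, hz1, hz2, hm''⟩
        obtain ⟨x, hx, hyx⟩ := (hh1 y x₁ x₂).mpr ⟨y₁, y₂, hy1, hy2, hm'⟩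
        exact ⟨x, hx, y, hyx, hzy⟩
    · intro z x
      constructor
      · rintro ⟨y, hyx, hzy⟩
        exact ⟨s' y, (hh2 y x).mp hyx, kflip z y hzy⟩
      · rintro ⟨y, hyx, hzy⟩
        refine ⟨s' y, hflip y x hyx, ?_⟩
        have := kflip (s'' z) y hzy
        rwa [hs''inv z] at this
    · ext z
      simp only [Set.mem_setOf_eq]
      constructor
      · rintro ⟨a, haE, y, hya, hzy⟩
        have hyE' : y ∈ E' := by rw [← hh3]; exact ⟨a, haE, hya⟩
        rw [← hk3]; exact ⟨y, hyE', hzy⟩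
      · intro hzE
        rw [← hk3] at hzE
        obtain ⟨b, hbE', hzb⟩ := hzE
        rw [← hh3] at hbE'
        obtain ⟨a, haE, hba⟩ := hbE'
        exact ⟨a, haE, b, hba, hzb⟩
end

section
/- Let (Γ, m, E, s) be a groupoid in the sense of Zakrzewski. A subset B ⊆ Γ is a bisection if and only if B·s(B) = s(B)·B = E, where B·s(B) := {z ∈ Γ : ∃ b₁, b₂ ∈ B, (z; b₁, s(b₂)) ∈ m} and s(B)·B := {z ∈ Γ : ∃ b₁, b₂ ∈ B, (z; s(b₁), b₂) ∈ m}. -/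
/-- A bisection of a Zakrzewski groupoid with identities `E` and identity maps
`eL`, `eR`: both restrictions `e_L|_B` and `e_R|_B` are bijections onto `E`. -/
def IsBisection {Γ : Type*} (E : Set Γ) (eL eR : Γ → Γ) (B : Set Γ) : Prop :=
  Set.BijOn eL B E ∧ Set.BijOn eR B E

/-- `B ⊆ Γ` is a bisection iff `B·s(B) = s(B)·B = E`. -/
theorem stmt12 {Γ : Type*} (m : Γ → Γ → Γ → Prop) (E : Set Γ) (s : Γ → Γ)
    (hG : IsZGroupoid m E s)
    (eL eR : Γ → Γ)
    (hL : ∀ x, eL x ∈ E ∧ m x (eL x) x) (hR : ∀ x, eR x ∈ E ∧ m x x (eR x))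
    (B : Set Γ) :
    IsBisection E eL eR B ↔
      ({z | ∃ b₁ ∈ B, ∃ b₂ ∈ B, m z b₁ (s b₂)} = E ∧
       {z | ∃ b₁ ∈ B, ∃ b₂ ∈ B, m z (s b₁) b₂} = E) := by
  obtain ⟨hss, hassoc, hidL, hidR, hinv, hpos, hposE⟩ := hG
  -- identities absorb on the left and on the right
  have L1 : ∀ a ∈ E, ∀ z x, m z a x → z = x := fun a ha z x h => (hidL z x).mp ⟨a, ha, h⟩
  have L2 : ∀ a ∈ E, ∀ z x, m z x a → z = x := fun a ha z x h => (hidR z x).mp ⟨a, ha, h⟩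
  -- positivity in the other order
  have posE' : ∀ x z, m z x (s x) → z ∈ E := fun x z h => hposE (s x) z (by rwa [hss])
  have pos' : ∀ x, ∃ z, m z x (s x) := fun x => by have := hpos (s x); rwa [hss] at this
  -- uniqueness of left/right identities
  have idLu : ∀ x a, a ∈ E → m x a x → a = eL x := by
    intro x a ha h
    obtain ⟨u, hu1, hu2⟩ := (hassoc a (eL x) x x).mpr ⟨x, (hL x).2, h⟩
    have h1 := L1 a ha u (eL x) hu1
    have h2 := L2 (eL x) (hL x).1 u a hu1
    rw [← h2]; exact h1
  have idRu : ∀ x a, a ∈ E → m x x a → a = eR x := by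
    intro x a ha h
    obtain ⟨v, hv1, hv2⟩ := (hassoc x a (eR x) x).mp ⟨x, h, (hR x).2⟩
    have h1 := L1 a ha v (eR x) hv1
    have h2 := L2 (eR x) (hR x).1 v a hv1
    rw [← h2]; exact h1
  -- the left identity of x absorbs any product with left factor x, etc.
  have mEl : ∀ z x y, m z x y → m z (eL x) z := by
    intro z x y h
    obtain ⟨v, hv1, hv2⟩ := (hassoc (eL x) x y z).mp ⟨x, (hL x).2, h⟩
    have hzv : v = z := (L1 (eL x) (hL x).1 z v hv2).symm
    rwa [hzv] at hv2
  have mEr : ∀ z x y, m z x y → m z z (eR y) := by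
    intro z x y h
    obtain ⟨u, hu1, hu2⟩ := (hassoc x y (eR y) z).mpr ⟨y, (hR y).2, h⟩
    have hzu : u = z := (L2 (eR y) (hR y).1 z u hu2).symm
    rwa [hzu] at hu2
  have eLc : ∀ z x y, m z x y → eL z = eL x :=
    fun z x y h => (idLu z (eL x) (hL x).1 (mEl z x y h)).symm
  have eRc : ∀ z x y, m z x y → eR z = eR y :=
    fun z x y h => (idRu z (eR y) (hR y).1 (mEr z x y h)).symm
  have cmid : ∀ z x y, m z x y → eR x = eL y := by
    intro z x y h
    obtain ⟨u, hu1, hu2⟩ := (hassoc x (eL y) y z).mpr ⟨y, (hL y).2, h⟩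
    have hux : u = x := L2 (eL y) (hL y).1 u x hu1
    rw [hux] at hu1
    exact (idRu x (eL y) (hL y).1 hu1).symm
  -- identities are their own left/right identities
  have eEL : ∀ a ∈ E, eL a = a := fun a ha => (L2 a ha a (eL a) (hL a).2).symm
  have eER : ∀ a ∈ E, eR a = a := fun a ha => (L1 a ha a (eR a) (hR a).2).symm
  -- identities of inverses
  have eLs : ∀ x, eL (s x) = eR x := by
    intro x; obtain ⟨p, hp⟩ := pos' x; exact (cmid p x (s x) hp).symm
  have eRs : ∀ x, eR (s x) = eL x := by
    intro x; obtain ⟨p, hp⟩ := hpos x; exact cmid p (s x) x hp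
  -- x · s x = eL x and s x · x = eR x
  have mi : ∀ x, m (eL x) x (s x) := by
    intro x
    obtain ⟨p, hp⟩ := pos' x
    have hpE := posE' x p hp
    have : p = eL x := (eEL p hpE).symm.trans (eLc p x (s x) hp)
    rwa [this] at hp
  have mii : ∀ x, m (eR x) (s x) x := by
    intro x
    obtain ⟨p, hp⟩ := hpos x
    have hpE := hposE x p hp
    have : p = eR x := (eEL p hpE).symm.trans ((eLc p (s x) x hp).trans (eLs x))
    rwa [this] at hp
  -- inverse relation for products
  have L6 : ∀ z x y, m z x y → m y (s x) z := by
    intro z x y h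
    obtain ⟨v, hv1, hv2⟩ := (hassoc x (s x) z z).mp ⟨eL x, mi x, mEl z x y h⟩
    obtain ⟨u, hu1, hu2⟩ := (hassoc (s x) x y v).mpr ⟨z, h, hv1⟩
    have huE := hposE x u hu1
    have : v = y := L1 u huE v y hu2
    rwa [this] at hv1
  -- products are unique
  have L5 : ∀ z z' x y, m z x y → m z' x y → z' = z := by
    intro z z' x y h h'
    obtain ⟨u, hu1, hu2⟩ := (hassoc x (s x) z z').mpr ⟨y, L6 z x y h, h'⟩
    exact L1 u (posE' x u hu1) z' z hu2
  have L6' : ∀ z x y, m z x y → m x z (s y) := by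
    intro z x y h
    have hxx : m x x (eL y) := by
      have := (hR x).2; rwa [cmid z x y h] at this
    obtain ⟨u, hu1, hu2⟩ := (hassoc x y (s y) x).mpr ⟨eL y, mi y, hxx⟩
    have : u = z := L5 z u x y h hu1
    rwa [this] at hu2
  -- cancellation
  have cancelL : ∀ z x y y', m z x y → m z x y' → y' = y := fun z x y y' h h' =>
    L5 y y' (s x) z (L6 z x y h) (L6 z x y' h')
  -- composability
  have C2 : ∀ x y, eR x = eL y → ∃ z, m z x y := by
    intro x y hxy
    have h1 : m y (eR x) y := by rw [hxy]; exact (hL y).2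
    obtain ⟨v, hv1, hv2⟩ := (hassoc (s x) x y y).mp ⟨eR x, mii x, h1⟩
    exact ⟨v, hv1⟩
  constructor
  · rintro ⟨⟨hLm, hLi, hLsj⟩, hRm, hRi, hRsj⟩
    constructor
    · ext z
      simp only [Set.mem_setOf_eq]
      constructor
      · rintro ⟨b₁, hb₁, b₂, hb₂, hm⟩
        have h12 : b₁ = b₂ := hRi hb₁ hb₂ ((cmid z b₁ (s b₂) hm).trans (eLs b₂))
        rw [h12] at hm
        exact posE' b₂ z hm
      · intro hz
        obtain ⟨b, hb, hbe⟩ := hLsj hz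
        exact ⟨b, hb, b, hb, by rw [← hbe]; exact mi b⟩
    · ext z
      simp only [Set.mem_setOf_eq]
      constructor
      · rintro ⟨b₁, hb₁, b₂, hb₂, hm⟩
        have h12 : b₁ = b₂ := hLi hb₁ hb₂ ((eRs b₁).symm.trans (cmid z (s b₁) b₂ hm))
        rw [← h12] at hm
        exact hposE b₁ z hm
      · intro hz
        obtain ⟨b, hb, hbe⟩ := hRsj hz
        exact ⟨b, hb, b, hb, by rw [← hbe]; exact mii b⟩
  · rintro ⟨h1, h2⟩
    constructor
    · refine ⟨fun b _ => (hL b).1, ?_, ?_⟩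
      · intro b hb b' hb' he
        have hcomp : eR (s b') = eL b := by rw [eRs b']; exact he.symm
        obtain ⟨z, hz⟩ := C2 (s b') b hcomp
        have hzE : z ∈ E := by rw [← h2]; exact ⟨b', hb', b, hb, hz⟩
        have hz2 : z = eR b' := (eEL z hzE).symm.trans ((eLc z (s b') b hz).trans (eLs b'))
        rw [hz2] at hz
        exact cancelL (eR b') (s b') b' b (mii b') hz
      · intro a ha
        have : a ∈ {z | ∃ b₁ ∈ B, ∃ b₂ ∈ B, m z b₁ (s b₂)} := by rw [h1]; exact ha
        obtain ⟨b₁, hb₁, b₂, hb₂, hm⟩ := this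
        exact ⟨b₁, hb₁, (eLc a b₁ (s b₂) hm).symm.trans (eEL a ha)⟩
    · refine ⟨fun b _ => (hR b).1, ?_, ?_⟩
      · intro b hb b' hb' he
        have hcomp : eR b = eL (s b') := by rw [eLs b']; exact he
        obtain ⟨z, hz⟩ := C2 b (s b') hcomp
        have hzE : z ∈ E := by rw [← h1]; exact ⟨b, hb, b', hb', hz⟩
        have hz2 : z = eL b := (eEL z hzE).symm.trans (eLc z b (s b') hz)
        rw [hz2] at hz
        have hss' : s b' = s b := cancelL (eL b) b (s b) (s b') (mi b) hz
        have := congrArg s hss'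
        rw [hss, hss] at this
        exact this.symm
      · intro a ha
        have : a ∈ {z | ∃ b₁ ∈ B, ∃ b₂ ∈ B, m z (s b₁) b₂} := by rw [h2]; exact ha
        obtain ⟨b₁, hb₁, b₂, hb₂, hm⟩ := this
        exact ⟨b₂, hb₂, (eRc a (s b₁) b₂ hm).symm.trans (eER a ha)⟩
end

section
/- Let (Γ, m, E, s) be a groupoid in the sense of Zakrzewski. If B and C are bisections of Γ, then BC := {z ∈ Γ : ∃ b ∈ B, c ∈ C, (z; b, c) ∈ m} is a bisection of Γ; moreover, the set of all bisections of Γ forms a group under this product, with identity element E and with the inverse of B given by s(B) := {s(b) : b ∈ B}. -/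
/-- The product `BC := {z : ∃ b ∈ B, c ∈ C, (z; b, c) ∈ m}` of two subsets. -/
def bprod {Γ : Type*} (m : Γ → Γ → Γ → Prop) (B C : Set Γ) : Set Γ :=
  {z | ∃ b ∈ B, ∃ c ∈ C, m z b c}

/-- The product of two bisections is a bisection, and the bisections form a group
under this product, with identity element `E` and inverse `B ↦ s(B)`. -/
theorem stmt13 {Γ : Type*} (m : Γ → Γ → Γ → Prop) (E : Set Γ) (s : Γ → Γ)
    (hG : IsZGroupoid m E s)
    (eL eR : Γ → Γ)
    (hL : ∀ x, eL x ∈ E ∧ m x (eL x) x) (hR : ∀ x, eR x ∈ E ∧ m x x (eR x)) :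
    (∀ B C, IsBisection E eL eR B → IsBisection E eL eR C →
        IsBisection E eL eR (bprod m B C)) ∧
    IsBisection E eL eR E ∧
    (∀ B, IsBisection E eL eR B → IsBisection E eL eR (s '' B)) ∧
    (∀ B C D, IsBisection E eL eR B → IsBisection E eL eR C → IsBisection E eL eR D →
        bprod m (bprod m B C) D = bprod m B (bprod m C D)) ∧
    (∀ B, IsBisection E eL eR B → bprod m E B = B ∧ bprod m B E = B) ∧
    (∀ B, IsBisection E eL eR B →
        bprod m B (s '' B) = E ∧ bprod m (s '' B) B = E) := by
  obtain ⟨hss, hA, hIdL, hIdR, hInv, hSP1, hSP2⟩ := hG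
  -- `s` fixes identities
  have sE : ∀ a ∈ E, s a = a := by
    intro a ha
    obtain ⟨z, hz⟩ := hSP1 a
    have hzE := hSP2 a z hz
    have h1 : z = s a := (hIdR z (s a)).mp ⟨a, ha, hz⟩
    subst h1
    exact (hIdL (s a) a).mp ⟨s a, hzE, hz⟩
  have maa : ∀ a ∈ E, m a a a := by
    intro a ha
    obtain ⟨z, hz⟩ := hSP1 a
    have h1 : z = s a := (hIdR z (s a)).mp ⟨a, ha, hz⟩
    rw [h1, sE a ha] at hz
    exact hz
  -- uniqueness of left/right identities
  have uniqL : ∀ x e, e ∈ E → m x e x → e = eL x := by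
    intro x e he hme
    obtain ⟨u, hu1, _⟩ := (hA e (eL x) x x).mpr ⟨x, (hL x).2, hme⟩
    have h1 : u = eL x := (hIdL u (eL x)).mp ⟨e, he, hu1⟩
    have h2 : u = e := (hIdR u e).mp ⟨eL x, (hL x).1, hu1⟩
    rw [← h2, h1]
  have uniqR : ∀ x e, e ∈ E → m x x e → e = eR x := by
    intro x e he hme
    obtain ⟨v, hv1, _⟩ := (hA x e (eR x) x).mp ⟨x, hme, (hR x).2⟩
    have h1 : v = eR x := (hIdL v (eR x)).mp ⟨e, he, hv1⟩
    have h2 : v = e := (hIdR v e).mp ⟨eR x, (hR x).1, hv1⟩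
    rw [← h2, h1]
  have eLE : ∀ a ∈ E, eL a = a := fun a ha => (uniqL a a ha (maa a ha)).symm
  -- identities of a product
  have eL_of : ∀ z x y, m z x y → eL z = eL x := by
    intro z x y hz
    obtain ⟨v, _, hv2⟩ := (hA (eL x) x y z).mp ⟨x, (hL x).2, hz⟩
    have h1 : z = v := (hIdL z v).mp ⟨eL x, (hL x).1, hv2⟩
    rw [← h1] at hv2
    exact (uniqL z (eL x) (hL x).1 hv2).symm
  have eR_of : ∀ z x y, m z x y → eR z = eR y := by
    intro z x y hz
    obtain ⟨u, _, hu2⟩ := (hA x y (eR y) z).mpr ⟨y, (hR y).2, hz⟩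
    have h1 : z = u := (hIdR z u).mp ⟨eR y, (hR y).1, hu2⟩
    rw [← h1] at hu2
    exact (uniqR z (eR y) (hR y).1 hu2).symm
  have mid : ∀ z x y, m z x y → eR x = eL y := by
    intro z x y hz
    obtain ⟨v, hv1, _⟩ := (hA x (eR x) y z).mp ⟨x, (hR x).2, hz⟩
    have h1 : v = y := (hIdL v y).mp ⟨eR x, (hR x).1, hv1⟩
    rw [h1] at hv1
    exact uniqL y (eR x) (hR x).1 hv1
  -- identities of the inverse
  have eL_s : ∀ x, eL (s x) = eR x := by
    intro x
    have h : m (s x) (eR x) (s x) := by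
      rw [hInv x (eR x) (s x), hss, sE (eR x) (hR x).1]
      exact (hR x).2
    exact (uniqL (s x) (eR x) (hR x).1 h).symm
  have eR_s : ∀ x, eR (s x) = eL x := by
    intro x
    have h : m (s x) (s x) (eL x) := by
      rw [hInv x (s x) (eL x), hss, sE (eL x) (hL x).1]
      exact (hL x).2
    exact (uniqR (s x) (eL x) (hL x).1 h).symm
  -- `(eR x; s x, x) ∈ m` and `(eL x; x, s x) ∈ m`
  have L7 : ∀ x, m (eR x) (s x) x := by
    intro x
    obtain ⟨z, hz⟩ := hSP1 x
    have hzE := hSP2 x z hz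
    have h : z = eR x := by rw [← eLE z hzE, eL_of z (s x) x hz, eL_s]
    rw [← h]
    exact hz
  have L7' : ∀ x, m (eL x) x (s x) := by
    intro x
    have h := L7 (s x)
    rw [hss, eR_s] at h
    exact h
  -- existence of products for composable pairs
  have comp_ex : ∀ x y, eR x = eL y → ∃ z, m z x y := by
    intro x y h
    have h1 : m (eL y) (s x) x := by rw [← h]; exact L7 x
    obtain ⟨v, hv1, _⟩ := (hA (s x) x y y).mp ⟨eL y, h1, (hL y).2⟩
    exact ⟨v, hv1⟩
  -- cancellation
  have cancel : ∀ z x y w, m z x y → m w (s x) z → w = y := by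
    intro z x y w hz hw
    obtain ⟨u, hu1, hu2⟩ := (hA (s x) x y w).mpr ⟨z, hz, hw⟩
    exact (hIdL w y).mp ⟨u, hSP2 x u hu1, hu2⟩
  -- uniqueness of products
  have uniq : ∀ z z' x y, m z x y → m z' x y → z = z' := by
    intro z z' x y hz hz'
    have hc : eR (s x) = eL z := by rw [eR_s, eL_of z x y hz]
    obtain ⟨w, hw⟩ := comp_ex (s x) z hc
    rw [cancel z x y w hz hw] at hw
    exact (cancel y (s x) z z' hw (by rw [hss]; exact hz')).symm
  have L12 : ∀ v x, m v x (s x) → v = eL x := by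
    intro v x hv
    have hvE : v ∈ E := hSP2 (s x) v (by rw [hss]; exact hv)
    rw [← eLE v hvE, eL_of v x (s x) hv]
  have L12' : ∀ v x, m v (s x) x → v = eR x := by
    intro v x hv
    exact uniq v (eR x) (s x) x hv (L7 x)
  refine ⟨?_, ?_, ?_, ?_, ?_, ?_⟩
  · -- products of bisections
    rintro B C ⟨hBL, hBR⟩ ⟨hCL, hCR⟩
    constructor
    · refine ⟨?_, ?_, ?_⟩
      · rintro z ⟨b, hb, c, hc, hz⟩
        show eL z ∈ E
        rw [eL_of z b c hz]
        exact hBL.1 hb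
      · rintro z ⟨b, hb, c, hc, hz⟩ z' ⟨b', hb', c', hc', hz'⟩ he
        rw [eL_of z b c hz, eL_of z' b' c' hz'] at he
        have hbb : b = b' := hBL.2.1 hb hb' he
        subst hbb
        have hcc : c = c' := hCL.2.1 hc hc'
          (by rw [← mid z b c hz, ← mid z' b c' hz'])
        subst hcc
        exact uniq z z' b c hz hz'
      · intro e he
        obtain ⟨b, hb, hbe⟩ := hBL.2.2 he
        obtain ⟨c, hc, hce⟩ := hCL.2.2 (hR b).1
        obtain ⟨z, hz⟩ := comp_ex b c hce.symm
        exact ⟨z, ⟨b, hb, c, hc, hz⟩, by rw [eL_of z b c hz, hbe]⟩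
    · refine ⟨?_, ?_, ?_⟩
      · rintro z ⟨b, hb, c, hc, hz⟩
        show eR z ∈ E
        rw [eR_of z b c hz]
        exact hCR.1 hc
      · rintro z ⟨b, hb, c, hc, hz⟩ z' ⟨b', hb', c', hc', hz'⟩ he
        rw [eR_of z b c hz, eR_of z' b' c' hz'] at he
        have hcc : c = c' := hCR.2.1 hc hc' he
        subst hcc
        have hbb : b = b' := hBR.2.1 hb hb'
          (by rw [mid z b c hz, mid z' b' c hz'])
        subst hbb
        exact uniq z z' b c hz hz'
      · intro e he
        obtain ⟨c, hc, hce⟩ := hCR.2.2 he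
        obtain ⟨b, hb, hbe⟩ := hBR.2.2 (hL c).1
        obtain ⟨z, hz⟩ := comp_ex b c hbe
        exact ⟨z, ⟨b, hb, c, hc, hz⟩, by rw [eR_of z b c hz, hce]⟩
  · -- `E` is a bisection
    have eRE : ∀ a ∈ E, eR a = a := fun a ha => (uniqR a a ha (maa a ha)).symm
    exact ⟨⟨fun a ha => by rw [eLE a ha]; exact ha,
            fun a ha a' ha' h => by rwa [eLE a ha, eLE a' ha'] at h,
            fun e he => ⟨e, he, eLE e he⟩⟩,
           ⟨fun a ha => by rw [eRE a ha]; exact ha,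
            fun a ha a' ha' h => by rwa [eRE a ha, eRE a' ha'] at h,
            fun e he => ⟨e, he, eRE e he⟩⟩⟩
  · -- `s '' B` is a bisection
    rintro B ⟨hBL, hBR⟩
    constructor
    · refine ⟨?_, ?_, ?_⟩
      · rintro _ ⟨b, hb, rfl⟩
        show eL (s b) ∈ E
        rw [eL_s b]
        exact hBR.1 hb
      · rintro _ ⟨b, hb, rfl⟩ _ ⟨b', hb', rfl⟩ h
        rw [eL_s, eL_s] at h
        rw [hBR.2.1 hb hb' h]
      · intro e he
        obtain ⟨b, hb, hbe⟩ := hBR.2.2 he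
        exact ⟨s b, ⟨b, hb, rfl⟩, by rw [eL_s, hbe]⟩
    · refine ⟨?_, ?_, ?_⟩
      · rintro _ ⟨b, hb, rfl⟩
        show eR (s b) ∈ E
        rw [eR_s b]
        exact hBL.1 hb
      · rintro _ ⟨b, hb, rfl⟩ _ ⟨b', hb', rfl⟩ h
        rw [eR_s, eR_s] at h
        rw [hBL.2.1 hb hb' h]
      · intro e he
        obtain ⟨b, hb, hbe⟩ := hBL.2.2 he
        exact ⟨s b, ⟨b, hb, rfl⟩, by rw [eR_s, hbe]⟩
  · -- associativity
    intro B C D _ _ _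
    ext z
    constructor
    · rintro ⟨u, ⟨b, hb, c, hc, hu⟩, d, hd, hz⟩
      obtain ⟨v, hv1, hv2⟩ := (hA b c d z).mp ⟨u, hu, hz⟩
      exact ⟨b, hb, v, ⟨c, hc, d, hd, hv1⟩, hv2⟩
    · rintro ⟨b, hb, v, ⟨c, hc, d, hd, hv⟩, hz⟩
      obtain ⟨u, hu1, hu2⟩ := (hA b c d z).mpr ⟨v, hv, hz⟩
      exact ⟨u, ⟨b, hb, c, hc, hu1⟩, d, hd, hu2⟩
  · -- `E` is an identity for the product
    intro B _
    constructor
    · ext z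
      constructor
      · rintro ⟨a, ha, b, hb, hz⟩
        rw [(hIdL z b).mp ⟨a, ha, hz⟩]
        exact hb
      · intro hb
        exact ⟨eL z, (hL z).1, z, hb, (hL z).2⟩
    · ext z
      constructor
      · rintro ⟨b, hb, a, ha, hz⟩
        rw [(hIdR z b).mp ⟨a, ha, hz⟩]
        exact hb
      · intro hb
        exact ⟨z, hb, eR z, (hR z).1, (hR z).2⟩
  · -- `s '' B` is an inverse for `B`
    rintro B ⟨hBL, hBR⟩
    constructor
    · ext e
      constructor
      · rintro ⟨b, hb, _, ⟨b', hb', rfl⟩, hz⟩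
        have hbb : b = b' := hBR.2.1 hb hb' (by rw [mid e b (s b') hz, eL_s])
        subst hbb
        rw [L12 e b hz]
        exact (hL b).1
      · intro he
        obtain ⟨b, hb, hbe⟩ := hBL.2.2 he
        exact ⟨b, hb, s b, ⟨b, hb, rfl⟩, by rw [← hbe]; exact L7' b⟩
    · ext e
      constructor
      · rintro ⟨_, ⟨b, hb, rfl⟩, b', hb', hz⟩
        have hbb : b = b' := hBL.2.1 hb hb' (by rw [← mid e (s b) b' hz, eR_s])
        subst hbb
        rw [L12' e b hz]
        exact (hR b).1
      · intro he
        obtain ⟨b, hb, hbe⟩ := hBR.2.2 he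
        exact ⟨s b, ⟨b, hb, rfl⟩, b, hb, by rw [← hbe]; exact L7 b⟩
end

section
/- Let (Γ, m, E, s) be a groupoid in the sense of Zakrzewski. Then (A(Γ), convolution, *, ‖·‖) is a normed *-algebra: for all f, f₁, f₂, f₃ ∈ A(Γ), the convolution f₁f₂ is a well-defined finitely supported function; (f₁f₂)f₃ = f₁(f₂f₃); (f₁f₂)* = f₂*f₁*; ‖f‖ is finite with ‖f‖ = 0 implying f = 0; ‖f₁ + f₂‖ ≤ ‖f₁‖ + ‖f₂‖; ‖f₁f₂‖ ≤ ‖f₁‖·‖f₂‖; and ‖f*‖ = ‖f‖. -/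
/-- The convolution on finitely supported functions:
`(f₁ f₂)(x) = Σ_{y ∈ F_l(e_L(x))} f₁(y) f₂(s(y)·x)`, where `mul` is the groupoid
product on composable pairs. -/
noncomputable def zconv {Γ : Type*} (eL : Γ → Γ) (s : Γ → Γ) (mul : Γ → Γ → Γ)
    (f₁ f₂ : Γ → ℂ) : Γ → ℂ :=
  fun x => ∑ᶠ y ∈ {y | eL y = eL x}, f₁ y * f₂ (mul (s y) x)

/-- The star operation `f*(x) = conj (f (s x))`. -/
def zstar {Γ : Type*} (s : Γ → Γ) (f : Γ → ℂ) : Γ → ℂ :=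
  fun x => star (f (s x))

/-- The fiber norm `a ↦ Σ_{x : e(x) = a} |f(x)|`. -/
noncomputable def zfibNorm {Γ : Type*} (e : Γ → Γ) (f : Γ → ℂ) (a : Γ) : ℝ :=
  ∑ᶠ x ∈ {x | e x = a}, ‖f x‖

/-- `‖f‖ := max (‖f‖_l, ‖f‖_r)` where `‖f‖_l = sup_{a ∈ E} Σ_{x ∈ F_l(a)} |f(x)|`
and `‖f‖_r = sup_{a ∈ E} Σ_{x ∈ F_r(a)} |f(x)|`. -/
noncomputable def znorm {Γ : Type*} (E : Set Γ) (eL eR : Γ → Γ) (f : Γ → ℂ) : ℝ :=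
  max (sSup (zfibNorm eL f '' E)) (sSup (zfibNorm eR f '' E))

/-!
The Zakrzewski axioms make `mul` a genuine groupoid law on composable pairs (functional and
associative, with inverse `s` and units `eL`, `eR`). Left translation `x ↦ s y · x` is then a
bijection from the left fibre of `eL y` onto that of `eR y`, and associativity and
`(f₁f₂)* = f₂*f₁*` are Fubini for finite sums followed by such a change of variables.
The same change of variables gives `Σ_{F_l(a)} |f₁f₂| ≤ Σ_{F_l(a)} |f₁| · ‖f₂‖_l`.
Since `*` exchanges left and right fibres and reverses products, the bound for `‖·‖_r`
follows by applying the left one to `f₂*f₁*`.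
-/

open Function Set

section Finsum

variable {α β : Type*}

theorem finsum_mem_finsum_mem_eq_inter {M : Type*} [AddCommMonoid M] {S A : Set α} {T B : Set β}
    (F : α → β → M) (hF : ∀ a ∈ S, ∀ b ∈ T, F a b ≠ 0 → a ∈ A ∧ b ∈ B) :
    ∑ᶠ a ∈ S, ∑ᶠ b ∈ T, F a b = ∑ᶠ a ∈ S ∩ A, ∑ᶠ b ∈ T ∩ B, F a b := by
  have inner : ∀ a ∈ S, ∑ᶠ b ∈ T, F a b = ∑ᶠ b ∈ T ∩ B, F a b := fun a ha =>
    finsum_mem_inter_support_eq' _ _ _ fun b hb =>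
      ⟨fun hbT => ⟨hbT, (hF a ha b hbT hb).2⟩, fun hb' => hb'.1⟩
  rw [finsum_mem_congr rfl inner]
  refine finsum_mem_inter_support_eq' _ _ _ fun a ha =>
    ⟨fun haS => ⟨haS, ?_⟩, fun ha' => ha'.1⟩
  obtain ⟨b, hb, hne⟩ := exists_ne_zero_of_finsum_mem_ne_zero ha
  exact (hF a haS b hb.1 hne).1

theorem finsum_mem_comm_of_subset {M : Type*} [AddCommMonoid M] {S A : Set α} {T B : Set β}
    (F : α → β → M) (hA : A.Finite) (hB : B.Finite)
    (hF : ∀ a ∈ S, ∀ b ∈ T, F a b ≠ 0 → a ∈ A ∧ b ∈ B) :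
    ∑ᶠ a ∈ S, ∑ᶠ b ∈ T, F a b = ∑ᶠ b ∈ T, ∑ᶠ a ∈ S, F a b := by
  rw [finsum_mem_finsum_mem_eq_inter F hF,
    finsum_mem_finsum_mem_eq_inter (fun b a => F a b) fun b hb a ha hne => (hF a ha b hb hne).symm]
  exact finsum_mem_comm _ (hA.inter_of_right S) (hB.inter_of_right T)

theorem finsum_mem_le_finsum_mem_of_nonneg {M : Type*} [AddCommMonoid M] [PartialOrder M]
    [IsOrderedAddMonoid M] {S : Set α} {g G : α → M} (hG : (S ∩ support G).Finite)
    (hg₀ : ∀ x ∈ S, 0 ≤ g x) (hgG : ∀ x ∈ S, g x ≤ G x) :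
    ∑ᶠ x ∈ S, g x ≤ ∑ᶠ x ∈ S, G x := by
  have hsub : S ∩ support g ⊆ hG.toFinset := fun x ⟨hxS, hx⟩ =>
    hG.mem_toFinset.2 ⟨hxS, fun h0 => hx (le_antisymm (h0 ▸ hgG x hxS) (hg₀ x hxS))⟩
  have hS : (hG.toFinset : Set α) ⊆ S := fun x hx => (hG.mem_toFinset.1 hx).1
  rw [finsum_mem_eq_sum_of_subset g hsub hS, finsum_mem_eq_sum G hG]
  exact Finset.sum_le_sum fun x hx => hgG x (hS hx)

theorem norm_finsum_mem_le {V : Type*} [SeminormedAddCommGroup V] {S : Set α} {g : α → V}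
    (hg : (S ∩ support g).Finite) : ‖∑ᶠ x ∈ S, g x‖ ≤ ∑ᶠ x ∈ S, ‖g x‖ := by
  have hsub : S ∩ support (fun x => ‖g x‖) ⊆ hg.toFinset := fun x ⟨hxS, hx⟩ =>
    hg.mem_toFinset.2 ⟨hxS, fun h0 => hx (by simp [h0])⟩
  rw [finsum_mem_eq_sum g hg,
    finsum_mem_eq_sum_of_subset _ hsub fun x hx => (hg.mem_toFinset.1 hx).1]
  exact norm_sum_le _ _

theorem star_finsum_mem {R : Type*} [AddCommMonoid R] [StarAddMonoid R] (g : α → R)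
    (S : Set α) : star (∑ᶠ x ∈ S, g x) = ∑ᶠ x ∈ S, star (g x) := by
  simp only [← starAddEquiv_apply, AddEquiv.map_finsum]

end Finsum

/-- `mul` is only constrained on composable pairs (`eR x = eL y`). -/
structure GroupoidLaws {Γ : Type*} (s eL eR : Γ → Γ) (mul : Γ → Γ → Γ) : Prop where
  involutive_s : Involutive s
  eL_s : ∀ x, eL (s x) = eR x
  eR_s : ∀ x, eR (s x) = eL x
  eL_mul : ∀ {x y}, eR x = eL y → eL (mul x y) = eL x
  s_mul : ∀ {x y}, eR x = eL y → s (mul x y) = mul (s y) (s x)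
  mul_assoc : ∀ {x y w}, eR x = eL y → eR y = eL w → mul (mul x y) w = mul x (mul y w)
  mul_s_self : ∀ x, mul x (s x) = eL x
  eL_mul_self : ∀ x, mul (eL x) x = x
  mul_eR_self : ∀ x, mul x (eR x) = x

namespace IsZGroupoid

variable {Γ : Type*} {m : Γ → Γ → Γ → Prop} {E : Set Γ} {s : Γ → Γ}
  {eL eR : Γ → Γ} {x y z w a : Γ}

theorem involutive_s (hG : IsZGroupoid m E s) : Involutive s := hG.1

theorem assoc (hG : IsZGroupoid m E s) :
    (∃ u, m u x y ∧ m z u w) ↔ (∃ v, m v y w ∧ m z x v) := hG.2.1 x y w z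

theorem eq_of_m_left_unit (hG : IsZGroupoid m E s) (ha : a ∈ E) (h : m z a x) : z = x :=
  (hG.2.2.1 z x).1 ⟨a, ha, h⟩

theorem eq_of_m_right_unit (hG : IsZGroupoid m E s) (ha : a ∈ E) (h : m z x a) : z = x :=
  (hG.2.2.2.1 z x).1 ⟨a, ha, h⟩

theorem m_s_iff (hG : IsZGroupoid m E s) : m (s z) x y ↔ m z (s y) (s x) := hG.2.2.2.2.1 z x y

theorem mem_of_m_s_self (hG : IsZGroupoid m E s) (h : m z (s x) x) : z ∈ E :=
  hG.2.2.2.2.2.2 x z h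

theorem s_eq_self_of_mem (hG : IsZGroupoid m E s) (ha : a ∈ E) : s a = a := by
  obtain ⟨z, hz⟩ := hG.2.2.2.2.2.1 (s a)
  have hzE := hG.mem_of_m_s_self hz
  rw [hG.involutive_s a] at hz
  obtain rfl := hG.eq_of_m_left_unit ha hz
  exact hG.eq_of_m_right_unit hzE hz

theorem eq_eL_of_m_self (hG : IsZGroupoid m E s) (hL : ∀ x, eL x ∈ E ∧ m x (eL x) x)
    (ha : a ∈ E) (h : m x a x) : a = eL x := by
  obtain ⟨u, hu, -⟩ := hG.assoc.2 ⟨x, (hL x).2, h⟩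
  exact (hG.eq_of_m_right_unit (hL x).1 hu).symm.trans (hG.eq_of_m_left_unit ha hu)

theorem eq_eR_of_m_self (hG : IsZGroupoid m E s) (hR : ∀ x, eR x ∈ E ∧ m x x (eR x))
    (ha : a ∈ E) (h : m x x a) : a = eR x := by
  obtain ⟨v, hv, -⟩ := hG.assoc.1 ⟨x, (hR x).2, h⟩
  exact (hG.eq_of_m_left_unit (hR x).1 hv).symm.trans (hG.eq_of_m_right_unit ha hv)

theorem eq_eR_of_m_s_self (hG : IsZGroupoid m E s) (hR : ∀ x, eR x ∈ E ∧ m x x (eR x))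
    (h : m z (s x) x) : z = eR x := by
  obtain ⟨u, hu, hzu⟩ := hG.assoc.2 ⟨x, (hR x).2, h⟩
  exact hG.eq_of_m_left_unit (hG.mem_of_m_s_self hu) hzu

theorem m_eR_s_self (hG : IsZGroupoid m E s) (hR : ∀ x, eR x ∈ E ∧ m x x (eR x)) :
    m (eR x) (s x) x := by
  obtain ⟨z, hz⟩ := hG.2.2.2.2.2.1 x
  rwa [← hG.eq_eR_of_m_s_self hR hz]

theorem eL_s (hG : IsZGroupoid m E s) (hL : ∀ x, eL x ∈ E ∧ m x (eL x) x)
    (hR : ∀ x, eR x ∈ E ∧ m x x (eR x)) : eL (s x) = eR x := by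
  refine (hG.eq_eL_of_m_self hL (hR x).1 (hG.m_s_iff.2 ?_)).symm
  rw [hG.involutive_s, hG.s_eq_self_of_mem (hR x).1]
  exact (hR x).2

theorem eR_s (hG : IsZGroupoid m E s) (hL : ∀ x, eL x ∈ E ∧ m x (eL x) x)
    (hR : ∀ x, eR x ∈ E ∧ m x x (eR x)) : eR (s x) = eL x := by
  refine (hG.eq_eR_of_m_self hR (hL x).1 (hG.m_s_iff.2 ?_)).symm
  rw [hG.involutive_s, hG.s_eq_self_of_mem (hL x).1]
  exact (hL x).2

theorem eR_eq_eL_of_m (hG : IsZGroupoid m E s) (hL : ∀ x, eL x ∈ E ∧ m x (eL x) x)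
    (hR : ∀ x, eR x ∈ E ∧ m x x (eR x)) (h : m z x y) : eR x = eL y := by
  obtain ⟨u, hu, -⟩ := hG.assoc.2 ⟨y, (hL y).2, h⟩
  rw [hG.eq_of_m_right_unit (hL y).1 hu] at hu
  exact (hG.eq_eR_of_m_self hR (hL y).1 hu).symm

theorem eL_eq_of_m (hG : IsZGroupoid m E s) (hL : ∀ x, eL x ∈ E ∧ m x (eL x) x)
    (h : m z x y) : eL z = eL x := by
  obtain ⟨v, -, hv⟩ := hG.assoc.1 ⟨x, (hL x).2, h⟩
  rw [← hG.eq_of_m_left_unit (hL x).1 hv] at hv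
  exact (hG.eq_eL_of_m_self hL (hL x).1 hv).symm

theorem eR_eq_of_m (hG : IsZGroupoid m E s) (hR : ∀ x, eR x ∈ E ∧ m x x (eR x))
    (h : m z x y) : eR z = eR y := by
  obtain ⟨u, -, hu⟩ := hG.assoc.2 ⟨y, (hR y).2, h⟩
  rw [← hG.eq_of_m_right_unit (hR y).1 hu] at hu
  exact (hG.eq_eR_of_m_self hR (hR y).1 hu).symm

theorem m_functional (hG : IsZGroupoid m E s) (hL : ∀ x, eL x ∈ E ∧ m x (eL x) x)
    (hR : ∀ x, eR x ∈ E ∧ m x x (eR x)) {z' : Γ} (h : m z x y) (h' : m z' x y) : z = z' := by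
  -- `v` is a product `x · y` with `s x · v = y`, so any product
  -- `t = x · (s x · v) = (x · s x) · v` of `x` and `y` is `v`
  obtain ⟨v, hv, hyv⟩ := hG.assoc.1
    ⟨eR x, hG.m_eR_s_self hR, by rw [hG.eR_eq_eL_of_m hL hR h]; exact (hL y).2⟩
  have key : ∀ t, m t x y → t = v := by
    intro t ht
    obtain ⟨u, hu, htu⟩ := hG.assoc.2 ⟨y, hyv, ht⟩
    have hu' : m u (s (s x)) (s x) := by rwa [hG.involutive_s]
    exact hG.eq_of_m_left_unit (hG.mem_of_m_s_self hu') htu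
  exact (key z h).trans (key z' h').symm

theorem groupoidLaws (hG : IsZGroupoid m E s) (hL : ∀ x, eL x ∈ E ∧ m x (eL x) x)
    (hR : ∀ x, eR x ∈ E ∧ m x x (eR x)) {mul : Γ → Γ → Γ}
    (hmul : ∀ x y, eR x = eL y → m (mul x y) x y) : GroupoidLaws s eL eR mul := by
  have eq_mul : ∀ {z x y}, m z x y → z = mul x y := fun h =>
    hG.m_functional hL hR h (hmul _ _ (hG.eR_eq_eL_of_m hL hR h))
  refine ⟨hG.involutive_s, fun x => hG.eL_s hL hR, fun x => hG.eR_s hL hR,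
    fun h => hG.eL_eq_of_m hL (hmul _ _ h), fun {x y} h => ?_, fun {x y w} h₁ h₂ => ?_,
    fun x => ?_, fun x => (eq_mul (hL x).2).symm, fun x => (eq_mul (hR x).2).symm⟩
  · refine eq_mul (hG.m_s_iff.2 ?_)
    rw [hG.involutive_s, hG.involutive_s]
    exact hmul x y h
  · obtain ⟨v, hv, hv'⟩ := hG.assoc.1 ⟨mul x y, hmul x y h₁,
      hmul _ w ((hG.eR_eq_of_m hR (hmul x y h₁)).trans h₂)⟩
    rw [eq_mul hv] at hv'
    exact eq_mul hv'
  · have h := hG.m_eR_s_self hR (x := s x)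
    rw [hG.involutive_s, hG.eR_s hL hR] at h
    exact (eq_mul h).symm

end IsZGroupoid

namespace GroupoidLaws

variable {Γ : Type*} {s eL eR : Γ → Γ} {mul : Γ → Γ → Γ} {f₁ f₂ f₃ : Γ → ℂ}
  {x y a : Γ}

theorem eL_mul_s (G : GroupoidLaws s eL eR mul) (h : eL y = eL x) : eL (mul (s y) x) = eR y := by
  rw [G.eL_mul ((G.eR_s y).trans h), G.eL_s]

theorem mul_mul_s_cancel (G : GroupoidLaws s eL eR mul) (h : eL y = eL x) :
    mul y (mul (s y) x) = x := by
  rw [← G.mul_assoc (G.eL_s y).symm ((G.eR_s y).trans h), G.mul_s_self, h, G.eL_mul_self]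

theorem mul_mul_s_cancel_right (G : GroupoidLaws s eL eR mul) (h : eR y = eL x) :
    mul (mul y x) (s x) = y := by
  rw [G.mul_assoc h (G.eL_s x).symm, G.mul_s_self, ← h, G.mul_eR_self]

theorem bijOn_mul_s (G : GroupoidLaws s eL eR mul) (hy : eL y = a) :
    BijOn (mul (s y)) {x | eL x = a} {z | eL z = eR y} := by
  refine InvOn.bijOn (f' := mul y) ⟨fun x hx => G.mul_mul_s_cancel (hy.trans hx.symm),
    fun z hz => ?_⟩ (fun x hx => G.eL_mul_s (hy.trans hx.symm)) fun z hz => ?_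
  · have h := G.mul_mul_s_cancel (y := s y) (x := z) ((G.eL_s y).trans hz.symm)
    rwa [G.involutive_s] at h
  · exact (G.eL_mul hz.symm).trans hy

theorem support_zconv_subset (G : GroupoidLaws s eL eR mul) (f₁ f₂ : Γ → ℂ) :
    support (zconv eL s mul f₁ f₂) ⊆ image2 mul (support f₁) (support f₂) := by
  intro x hx
  obtain ⟨y, hy, hne⟩ := exists_ne_zero_of_finsum_mem_ne_zero hx
  exact ⟨y, left_ne_zero_of_mul hne, _, right_ne_zero_of_mul hne, G.mul_mul_s_cancel hy⟩

theorem finite_support_zconv (G : GroupoidLaws s eL eR mul) (hf₁ : (support f₁).Finite)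
    (hf₂ : (support f₂).Finite) : (support (zconv eL s mul f₁ f₂)).Finite :=
  (hf₁.image2 mul hf₂).subset (G.support_zconv_subset f₁ f₂)

theorem zconv_assoc (G : GroupoidLaws s eL eR mul) (hf₁ : (support f₁).Finite)
    (hf₂ : (support f₂).Finite) : zconv eL s mul (zconv eL s mul f₁ f₂) f₃ =
      zconv eL s mul f₁ (zconv eL s mul f₂ f₃) := by
  funext x
  set S := {y | eL y = eL x}
  have fibre_eq : ∀ y ∈ S, {t | eL t = eL y} = S := fun y (hy : eL y = eL x) => by rw [hy]
  have cancel : ∀ t ∈ S, ∀ y ∈ S, mul (s (mul (s t) y)) (mul (s t) x) = mul (s y) x :=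
    fun t (ht : eL t = eL x) y (hy : eL y = eL x) => by
      rw [G.s_mul ((G.eR_s t).trans (ht.trans hy.symm)), G.involutive_s,
        G.mul_assoc ((G.eR_s y).trans (hy.trans ht.symm)) (G.eL_mul_s ht).symm,
        G.mul_mul_s_cancel ht]
  calc zconv eL s mul (zconv eL s mul f₁ f₂) f₃ x
      = ∑ᶠ y ∈ S, ∑ᶠ t ∈ S, f₁ t * f₂ (mul (s t) y) * f₃ (mul (s y) x) :=
        finsum_mem_congr rfl fun y hy => by rw [zconv, fibre_eq y hy, finsum_mem_mul]
    _ = ∑ᶠ t ∈ S, ∑ᶠ y ∈ S, f₁ t * f₂ (mul (s t) y) * f₃ (mul (s y) x) :=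
        finsum_mem_comm_of_subset _ (hf₁.image2 mul hf₂) hf₁ fun y hy t ht hne =>
          ⟨⟨t, left_ne_zero_of_mul (left_ne_zero_of_mul hne), _,
            right_ne_zero_of_mul (left_ne_zero_of_mul hne),
            G.mul_mul_s_cancel ((show eL t = eL x from ht).trans hy.symm)⟩,
          left_ne_zero_of_mul (left_ne_zero_of_mul hne)⟩
    _ = ∑ᶠ t ∈ S, f₁ t * zconv eL s mul f₂ f₃ (mul (s t) x) :=
        finsum_mem_congr rfl fun t ht => by
          rw [zconv, G.eL_mul_s ht, mul_finsum_mem]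
          refine finsum_mem_eq_of_bijOn _ (G.bijOn_mul_s ht) fun y hy => ?_
          rw [cancel t ht y hy, _root_.mul_assoc]

theorem zstar_zconv (G : GroupoidLaws s eL eR mul) (f₁ f₂ : Γ → ℂ) :
    zstar s (zconv eL s mul f₁ f₂) = zconv eL s mul (zstar s f₂) (zstar s f₁) := by
  funext x
  simp only [zstar, zconv]
  rw [star_finsum_mem, G.eL_s]
  refine (finsum_mem_eq_of_bijOn _ (G.bijOn_mul_s rfl) fun y (hy : eL y = eL x) => ?_).symm
  have hs : s (mul (s y) x) = mul (s x) y := by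
    rw [G.s_mul ((G.eR_s y).trans hy), G.involutive_s]
  rw [star_mul', ← hs, G.involutive_s, G.mul_mul_s_cancel_right ((G.eR_s y).trans hy), mul_comm]

end GroupoidLaws

section FibreNorm

variable {Γ : Type*} {E : Set Γ} {e eL eR : Γ → Γ} {g g₁ g₂ : Γ → ℂ} {a : Γ}

/-- `‖g‖_l` for `e = eL`, `‖g‖_r` for `e = eR`. -/
noncomputable def zsupNorm (E : Set Γ) (e : Γ → Γ) (g : Γ → ℂ) : ℝ :=
  sSup (zfibNorm e g '' E)

theorem znorm_eq_max (E : Set Γ) (eL eR : Γ → Γ) (g : Γ → ℂ) :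
    znorm E eL eR g = max (zsupNorm E eL g) (zsupNorm E eR g) := rfl

theorem zfibNorm_nonneg (e : Γ → Γ) (g : Γ → ℂ) (a : Γ) : 0 ≤ zfibNorm e g a :=
  finsum_nonneg fun _ => finsum_nonneg fun _ => norm_nonneg _

theorem finite_fibre_support_norm (hg : (support g).Finite) (a : Γ) :
    ({x | e x = a} ∩ support fun x => ‖g x‖).Finite :=
  hg.subset fun _ hx => norm_ne_zero_iff.1 hx.2

theorem norm_le_zfibNorm (hg : (support g).Finite) (x : Γ) : ‖g x‖ ≤ zfibNorm e g (e x) := by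
  by_cases hx : g x = 0
  · rw [hx, norm_zero]
    exact zfibNorm_nonneg e g _
  · have hfin := finite_fibre_support_norm (e := e) hg (e x)
    rw [zfibNorm, finsum_mem_eq_sum _ hfin]
    exact Finset.single_le_sum (fun _ _ => norm_nonneg _)
      (hfin.mem_toFinset.2 ⟨rfl, norm_ne_zero_iff.2 hx⟩)

theorem zfibNorm_le_sum (hg : (support g).Finite) (a : Γ) :
    zfibNorm e g a ≤ ∑ x ∈ hg.toFinset, ‖g x‖ := by
  have hfin := finite_fibre_support_norm (e := e) hg a
  rw [zfibNorm, finsum_mem_eq_sum _ hfin]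
  exact Finset.sum_le_sum_of_subset_of_nonneg
    (fun x hx => hg.mem_toFinset.2 (norm_ne_zero_iff.1 (hfin.mem_toFinset.1 hx).2))
    fun _ _ _ => norm_nonneg _

theorem bddAbove_zfibNorm (hg : (support g).Finite) : BddAbove (zfibNorm e g '' E) :=
  ⟨_, forall_mem_image.2 fun a _ => zfibNorm_le_sum hg a⟩

theorem zsupNorm_nonneg : 0 ≤ zsupNorm E e g :=
  Real.sSup_nonneg (forall_mem_image.2 fun a _ => zfibNorm_nonneg e g a)

theorem zfibNorm_le_zsupNorm (hg : (support g).Finite) (ha : a ∈ E) :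
    zfibNorm e g a ≤ zsupNorm E e g :=
  le_csSup (bddAbove_zfibNorm hg) (mem_image_of_mem _ ha)

theorem zsupNorm_le {c : ℝ} (hc : 0 ≤ c) (h : ∀ a ∈ E, zfibNorm e g a ≤ c) :
    zsupNorm E e g ≤ c :=
  Real.sSup_le (forall_mem_image.2 h) hc

theorem zfibNorm_add_le (hg₁ : (support g₁).Finite) (hg₂ : (support g₂).Finite) (a : Γ) :
    zfibNorm e (g₁ + g₂) a ≤ zfibNorm e g₁ a + zfibNorm e g₂ a := by
  have hfin₁ := finite_fibre_support_norm (e := e) hg₁ a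
  have hfin₂ := finite_fibre_support_norm (e := e) hg₂ a
  rw [zfibNorm, zfibNorm, zfibNorm, ← finsum_mem_add_distrib' hfin₁ hfin₂]
  refine finsum_mem_le_finsum_mem_of_nonneg ((hfin₁.union hfin₂).subset fun x ⟨hxS, hx⟩ =>
    (support_add _ _ hx).imp (⟨hxS, ·⟩) (⟨hxS, ·⟩)) (fun _ _ => norm_nonneg _)
    fun _ _ => norm_add_le _ _

theorem zsupNorm_add_le (hg₁ : (support g₁).Finite) (hg₂ : (support g₂).Finite) :
    zsupNorm E e (g₁ + g₂) ≤ zsupNorm E e g₁ + zsupNorm E e g₂ :=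
  zsupNorm_le (add_nonneg zsupNorm_nonneg zsupNorm_nonneg) fun a ha =>
    (zfibNorm_add_le hg₁ hg₂ a).trans
      (add_le_add (zfibNorm_le_zsupNorm hg₁ ha) (zfibNorm_le_zsupNorm hg₂ ha))

theorem znorm_add_le (hg₁ : (support g₁).Finite) (hg₂ : (support g₂).Finite) :
    znorm E eL eR (g₁ + g₂) ≤ znorm E eL eR g₁ + znorm E eL eR g₂ :=
  max_le ((zsupNorm_add_le hg₁ hg₂).trans (add_le_add (le_max_left _ _) (le_max_left _ _)))
    ((zsupNorm_add_le hg₁ hg₂).trans (add_le_add (le_max_right _ _) (le_max_right _ _)))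

theorem eq_zero_of_znorm_eq_zero (heL : ∀ x, eL x ∈ E) (hg : (support g).Finite)
    (h : znorm E eL eR g = 0) : g = 0 := by
  funext x
  refine norm_le_zero_iff.1 ?_
  calc ‖g x‖ ≤ zfibNorm eL g (eL x) := norm_le_zfibNorm hg x
    _ ≤ zsupNorm E eL g := zfibNorm_le_zsupNorm hg (heL x)
    _ ≤ znorm E eL eR g := le_max_left _ _
    _ = 0 := h

end FibreNorm

namespace GroupoidLaws

variable {Γ : Type*} {E : Set Γ} {s eL eR : Γ → Γ} {mul : Γ → Γ → Γ}
  {f₁ f₂ g : Γ → ℂ}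

theorem finite_support_zstar (G : GroupoidLaws s eL eR mul) (hg : (support g).Finite) :
    (support (zstar s g)).Finite :=
  (hg.preimage G.involutive_s.injective.injOn).subset fun _ hx h0 => hx (by simp [zstar, h0])

theorem zfibNorm_zstar (G : GroupoidLaws s eL eR mul) {e e' : Γ → Γ}
    (he : ∀ x, e (s x) = e' x) (g : Γ → ℂ) : zfibNorm e (zstar s g) = zfibNorm e' g := by
  funext a
  refine finsum_mem_eq_of_bijOn s (InvOn.bijOn ⟨fun x _ => G.involutive_s x,
    fun x _ => G.involutive_s x⟩ (fun x (hx : e x = a) => ?_) fun x (hx : e' x = a) => ?_)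
    fun _ _ => norm_star _
  · show e' (s x) = a
    rw [← he, G.involutive_s, hx]
  · show e (s x) = a
    rw [he, hx]

theorem znorm_zstar (G : GroupoidLaws s eL eR mul) (g : Γ → ℂ) :
    znorm E eL eR (zstar s g) = znorm E eL eR g := by
  rw [znorm, znorm, G.zfibNorm_zstar G.eL_s, G.zfibNorm_zstar G.eR_s, max_comm]

theorem zsupNorm_eR_eq (G : GroupoidLaws s eL eR mul) (g : Γ → ℂ) :
    zsupNorm E eR g = zsupNorm E eL (zstar s g) := by
  rw [zsupNorm, zsupNorm, G.zfibNorm_zstar G.eL_s]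

theorem zfibNorm_eL_zconv_le (G : GroupoidLaws s eL eR mul) (hf₁ : (support f₁).Finite)
    (hf₂ : (support f₂).Finite) {N : ℝ} (hN : ∀ y, zfibNorm eL f₂ (eR y) ≤ N) (a : Γ) :
    zfibNorm eL (zconv eL s mul f₁ f₂) a ≤ zfibNorm eL f₁ a * N := by
  set S := {x | eL x = a}
  have supp : ∀ x ∈ S, ∀ y ∈ S, ‖f₁ y‖ * ‖f₂ (mul (s y) x)‖ ≠ 0 →
      x ∈ image2 mul (support f₁) (support f₂) ∧ y ∈ support f₁ :=
    fun x (hx : eL x = a) y (hy : eL y = a) hne => by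
      have h₁ : f₁ y ≠ 0 := norm_ne_zero_iff.1 (left_ne_zero_of_mul hne)
      exact ⟨⟨y, h₁, _, norm_ne_zero_iff.1 (right_ne_zero_of_mul hne),
        G.mul_mul_s_cancel (hy.trans hx.symm)⟩, h₁⟩
  calc zfibNorm eL (zconv eL s mul f₁ f₂) a
      ≤ ∑ᶠ x ∈ S, ∑ᶠ y ∈ S, ‖f₁ y‖ * ‖f₂ (mul (s y) x)‖ := by
        refine finsum_mem_le_finsum_mem_of_nonneg ?_ (fun _ _ => norm_nonneg _)
          fun x (hx : eL x = a) => ?_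
        · refine (hf₁.image2 mul hf₂).subset fun x ⟨hx, hne⟩ => ?_
          obtain ⟨y, hy, hne'⟩ := exists_ne_zero_of_finsum_mem_ne_zero hne
          exact (supp x hx y hy hne').1
        · rw [zconv, hx]
          refine (norm_finsum_mem_le
            (hf₁.subset fun y hy => left_ne_zero_of_mul hy.2)).trans_eq ?_
          exact finsum_mem_congr rfl fun _ _ => norm_mul _ _
    _ = ∑ᶠ y ∈ S, ∑ᶠ x ∈ S, ‖f₁ y‖ * ‖f₂ (mul (s y) x)‖ :=
        finsum_mem_comm_of_subset _ (hf₁.image2 mul hf₂) hf₁ supp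
    _ = ∑ᶠ y ∈ S, ‖f₁ y‖ * zfibNorm eL f₂ (eR y) :=
        finsum_mem_congr rfl fun y hy => by
          rw [← mul_finsum_mem, zfibNorm]
          exact congrArg _ (finsum_mem_eq_of_bijOn _ (G.bijOn_mul_s hy) fun _ _ => rfl)
    _ ≤ ∑ᶠ y ∈ S, ‖f₁ y‖ * N :=
        finsum_mem_le_finsum_mem_of_nonneg (hf₁.subset fun y hy h0 => hy.2 (by simp [h0]))
          (fun _ _ => mul_nonneg (norm_nonneg _) (zfibNorm_nonneg _ _ _))
          fun y _ => mul_le_mul_of_nonneg_left (hN y) (norm_nonneg _)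
    _ = zfibNorm eL f₁ a * N := (finsum_mem_mul _ _).symm

theorem zsupNorm_eL_zconv_le (G : GroupoidLaws s eL eR mul) (heR : ∀ x, eR x ∈ E)
    (hf₁ : (support f₁).Finite) (hf₂ : (support f₂).Finite) :
    zsupNorm E eL (zconv eL s mul f₁ f₂) ≤ zsupNorm E eL f₁ * zsupNorm E eL f₂ :=
  zsupNorm_le (mul_nonneg zsupNorm_nonneg zsupNorm_nonneg) fun a ha =>
    (G.zfibNorm_eL_zconv_le hf₁ hf₂ (fun y => zfibNorm_le_zsupNorm hf₂ (heR y)) a).trans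
      (mul_le_mul_of_nonneg_right (zfibNorm_le_zsupNorm hf₁ ha) zsupNorm_nonneg)

theorem zsupNorm_eR_zconv_le (G : GroupoidLaws s eL eR mul) (heR : ∀ x, eR x ∈ E)
    (hf₁ : (support f₁).Finite) (hf₂ : (support f₂).Finite) :
    zsupNorm E eR (zconv eL s mul f₁ f₂) ≤ zsupNorm E eR f₁ * zsupNorm E eR f₂ := by
  rw [G.zsupNorm_eR_eq, G.zsupNorm_eR_eq f₁, G.zsupNorm_eR_eq f₂, G.zstar_zconv, mul_comm]
  exact G.zsupNorm_eL_zconv_le heR (G.finite_support_zstar hf₂) (G.finite_support_zstar hf₁)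

theorem znorm_zconv_le (G : GroupoidLaws s eL eR mul) (heR : ∀ x, eR x ∈ E)
    (hf₁ : (support f₁).Finite) (hf₂ : (support f₂).Finite) :
    znorm E eL eR (zconv eL s mul f₁ f₂) ≤ znorm E eL eR f₁ * znorm E eL eR f₂ := by
  have hmax : ∀ g : Γ → ℂ, 0 ≤ znorm E eL eR g := fun _ =>
    zsupNorm_nonneg.trans (le_max_left _ _)
  simp only [znorm_eq_max] at hmax ⊢
  exact max_le ((G.zsupNorm_eL_zconv_le heR hf₁ hf₂).trans
      (mul_le_mul (le_max_left _ _) (le_max_left _ _) zsupNorm_nonneg (hmax f₁)))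
    ((G.zsupNorm_eR_zconv_le heR hf₁ hf₂).trans
      (mul_le_mul (le_max_right _ _) (le_max_right _ _) zsupNorm_nonneg (hmax f₁)))

end GroupoidLaws

theorem stmt15_general {Γ : Type*} (m : Γ → Γ → Γ → Prop) (E : Set Γ) (s : Γ → Γ)
    (hG : IsZGroupoid m E s)
    (eL eR : Γ → Γ)
    (hL : ∀ x, eL x ∈ E ∧ m x (eL x) x) (hR : ∀ x, eR x ∈ E ∧ m x x (eR x))
    (mul : Γ → Γ → Γ) (hmul : ∀ x y, eR x = eL y → m (mul x y) x y)
    (f f₁ f₂ f₃ : Γ → ℂ)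
    (hf : {x | f x ≠ 0}.Finite) (hf₁ : {x | f₁ x ≠ 0}.Finite)
    (hf₂ : {x | f₂ x ≠ 0}.Finite) :
    (∀ x, {y | eL y = eL x ∧ f₁ y * f₂ (mul (s y) x) ≠ 0}.Finite) ∧
    {x | zconv eL s mul f₁ f₂ x ≠ 0}.Finite ∧
    zconv eL s mul (zconv eL s mul f₁ f₂) f₃ = zconv eL s mul f₁ (zconv eL s mul f₂ f₃) ∧
    zstar s (zconv eL s mul f₁ f₂) = zconv eL s mul (zstar s f₂) (zstar s f₁) ∧
    BddAbove (zfibNorm eL f '' E) ∧ BddAbove (zfibNorm eR f '' E) ∧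
    (znorm E eL eR f = 0 → f = 0) ∧
    znorm E eL eR (f₁ + f₂) ≤ znorm E eL eR f₁ + znorm E eL eR f₂ ∧
    znorm E eL eR (zconv eL s mul f₁ f₂) ≤ znorm E eL eR f₁ * znorm E eL eR f₂ ∧
    znorm E eL eR (zstar s f) = znorm E eL eR f := by
  have G := hG.groupoidLaws hL hR hmul
  exact ⟨fun x => hf₁.subset fun y hy => left_ne_zero_of_mul hy.2,
    G.finite_support_zconv hf₁ hf₂, G.zconv_assoc hf₁ hf₂, G.zstar_zconv f₁ f₂,
    bddAbove_zfibNorm hf, bddAbove_zfibNorm hf,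
    eq_zero_of_znorm_eq_zero (fun x => (hL x).1) hf, znorm_add_le hf₁ hf₂,
    G.znorm_zconv_le (fun x => (hR x).1) hf₁ hf₂, G.znorm_zstar f⟩

/-- `(A(Γ), ·, *, ‖·‖)` is a normed *-algebra. -/
theorem stmt15 {Γ : Type*} (m : Γ → Γ → Γ → Prop) (E : Set Γ) (s : Γ → Γ)
    (hG : IsZGroupoid m E s)
    (eL eR : Γ → Γ)
    (hL : ∀ x, eL x ∈ E ∧ m x (eL x) x) (hR : ∀ x, eR x ∈ E ∧ m x x (eR x))
    (mul : Γ → Γ → Γ) (hmul : ∀ x y, eR x = eL y → m (mul x y) x y)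
    (f f₁ f₂ f₃ : Γ → ℂ)
    (hf : {x | f x ≠ 0}.Finite) (hf₁ : {x | f₁ x ≠ 0}.Finite)
    (hf₂ : {x | f₂ x ≠ 0}.Finite) (hf₃ : {x | f₃ x ≠ 0}.Finite) :
    (∀ x, {y | eL y = eL x ∧ f₁ y * f₂ (mul (s y) x) ≠ 0}.Finite) ∧
    {x | zconv eL s mul f₁ f₂ x ≠ 0}.Finite ∧
    zconv eL s mul (zconv eL s mul f₁ f₂) f₃ = zconv eL s mul f₁ (zconv eL s mul f₂ f₃) ∧
    zstar s (zconv eL s mul f₁ f₂) = zconv eL s mul (zstar s f₂) (zstar s f₁) ∧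
    BddAbove (zfibNorm eL f '' E) ∧ BddAbove (zfibNorm eR f '' E) ∧
    (znorm E eL eR f = 0 → f = 0) ∧
    znorm E eL eR (f₁ + f₂) ≤ znorm E eL eR f₁ + znorm E eL eR f₂ ∧
    znorm E eL eR (zconv eL s mul f₁ f₂) ≤ znorm E eL eR f₁ * znorm E eL eR f₂ ∧
    znorm E eL eR (zstar s f) = znorm E eL eR f :=
  stmt15_general m E s hG eL eR hL hR mul hmul f f₁ f₂ f₃ hf hf₁ hf₂
end

section
/- Let h : Γ → Γ' be a morphism of groupoids. Then for all f₁ ∈ A(Γ) and f₂, f₃ ∈ A(Γ'): f₃* · (ĥ(f₁)f₂) = (ĥ(f₁*)f₃)* · f₂, where on the left the convolution is computed by the left-fiber formula (a finite sum since f₃* has finite support) and on the right by the right-fiber formula (a finite sum since f₂ has finite support). -/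
/-- Convolution computed by the left-fiber formula:
`(f₁ f₂)(x) = Σ_{y ∈ F_l(e_L(x))} f₁(y) f₂(s(y)·x)`. -/
noncomputable def zconvL {Γ : Type*} (eL : Γ → Γ) (s : Γ → Γ) (mul : Γ → Γ → Γ)
    (f₁ f₂ : Γ → ℂ) : Γ → ℂ :=
  fun x => ∑ᶠ y ∈ {y | eL y = eL x}, f₁ y * f₂ (mul (s y) x)

/-- Convolution computed by the right-fiber formula:
`(f₁ f₂)(x) = Σ_{z ∈ F_r(e_R(x))} f₁(x·s(z)) f₂(z)`. -/
noncomputable def zconvR {Γ : Type*} (eR : Γ → Γ) (s : Γ → Γ) (mul : Γ → Γ → Γ)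
    (f₁ f₂ : Γ → ℂ) : Γ → ℂ :=
  fun x => ∑ᶠ z ∈ {z | eR z = eR x}, f₁ (mul x (s z)) * f₂ z

/-- The action of a morphism on functions:
`(ĥ(f) f')(x') = Σ_{x : e_L(x) = f_h(a)} f(x) · f'(h_a^R(s(x)) · x')`, `a := e'_L(x')`. -/
noncomputable def hhatOp {Γ Γ' : Type*} (eL : Γ → Γ) (s : Γ → Γ) (eL' : Γ' → Γ')
    (mul' : Γ' → Γ' → Γ') (fh : Γ' → Γ) (hRmap : Γ' → Γ → Γ')
    (f : Γ → ℂ) (f' : Γ' → ℂ) : Γ' → ℂ :=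
  fun x' => ∑ᶠ x ∈ {x | eL x = fh (eL' x')}, f x * f' (mul' (hRmap (eL' x') (s x)) x')

set_option linter.unusedSectionVars false

namespace ZG

variable {Γ : Type*} {m : Γ → Γ → Γ → Prop} {E : Set Γ} {s : Γ → Γ}
variable (hG : IsZGroupoid m E s)
variable {eL eR : Γ → Γ}
variable (hL : ∀ x, eL x ∈ E ∧ m x (eL x) x) (hR : ∀ x, eR x ∈ E ∧ m x x (eR x))

section
include hG hL hR

theorem idl {a z x : Γ} (ha : a ∈ E) (h : m z a x) : z = x :=
  (hG.2.2.1 z x).1 ⟨a, ha, h⟩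

theorem idr {a z x : Γ} (ha : a ∈ E) (h : m z x a) : z = x :=
  (hG.2.2.2.1 z x).1 ⟨a, ha, h⟩

theorem minv {z x y : Γ} (h : m z x y) : m (s z) (s y) (s x) :=
  (hG.2.2.2.2.1 z (s y) (s x)).2 (by rwa [hG.1, hG.1])

theorem eL_uniq {a x : Γ} (ha : a ∈ E) (h : m x a x) : a = eL x := by
  obtain ⟨u, hu1, -⟩ := (hG.2.1 a (eL x) x x).2 ⟨x, (hL x).2, h⟩
  exact (idr hG hL hR (hL x).1 hu1).symm.trans (idl hG hL hR ha hu1)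

theorem eR_uniq {a x : Γ} (ha : a ∈ E) (h : m x x a) : a = eR x := by
  obtain ⟨v, hv1, -⟩ := (hG.2.1 x (eR x) a x).1 ⟨x, (hR x).2, h⟩
  exact (idl hG hL hR (hR x).1 hv1).symm.trans (idr hG hL hR ha hv1)

theorem eR_id {a : Γ} (ha : a ∈ E) : eR a = a := by
  obtain ⟨v, hv1, -⟩ := (hG.2.1 (eL a) a (eR a) a).1 ⟨a, (hL a).2, (hR a).2⟩
  exact (idl hG hL hR ha hv1).symm.trans (idr hG hL hR (hR a).1 hv1)

theorem m_id {a : Γ} (ha : a ∈ E) : m a a a := by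
  have := (hR a).2; rwa [eR_id hG hL hR ha] at this

theorem eL_id {a : Γ} (ha : a ∈ E) : eL a = a :=
  (eL_uniq hG hL hR ha (m_id hG hL hR ha)).symm

theorem s_fix {a : Γ} (ha : a ∈ E) : s a = a := by
  obtain ⟨z, hz⟩ := hG.2.2.2.2.2.1 a
  have hzE := hG.2.2.2.2.2.2 a z hz
  have h1 : z = s a := idr hG hL hR ha hz
  subst h1
  exact idl hG hL hR hzE hz

theorem s_memE {a : Γ} (ha : a ∈ E) : s a ∈ E := by rw [s_fix hG hL hR ha]; exact ha

theorem m_sinv_self_uniq {z x : Γ} (h : m z (s x) x) : z = eR x := by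
  obtain ⟨u, hu1, hu2⟩ := (hG.2.1 (s x) x (eR x) z).2 ⟨x, (hR x).2, h⟩
  exact idl hG hL hR (hG.2.2.2.2.2.2 x u hu1) hu2

theorem m_sinv_self (x : Γ) : m (eR x) (s x) x := by
  obtain ⟨z, hz⟩ := hG.2.2.2.2.2.1 x
  rwa [m_sinv_self_uniq hG hL hR hz] at hz

theorem eL_s (x : Γ) : eL (s x) = eR x := by
  have h := minv hG hL hR (hR x).2
  rw [s_fix hG hL hR (hR x).1] at h
  exact (eL_uniq hG hL hR (hR x).1 h).symm

theorem eR_s (x : Γ) : eR (s x) = eL x := by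
  have h := minv hG hL hR (hL x).2
  rw [s_fix hG hL hR (hL x).1] at h
  exact (eR_uniq hG hL hR (hL x).1 h).symm

theorem m_self_sinv (x : Γ) : m (eL x) x (s x) := by
  have h := m_sinv_self hG hL hR (s x)
  rwa [hG.1, eR_s hG hL hR] at h

theorem m_self_sinv_uniq {z x : Γ} (h : m z x (s x)) : z = eL x := by
  have h' : m z (s (s x)) (s x) := by rwa [hG.1]
  rw [m_sinv_self_uniq hG hL hR h', eR_s hG hL hR]

theorem m_eL {z x y : Γ} (h : m z x y) : eL z = eL x := by
  obtain ⟨v, hv1, hv2⟩ := (hG.2.1 (eL x) x y z).1 ⟨x, (hL x).2, h⟩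
  have hzv : z = v := idl hG hL hR (hL x).1 hv2
  subst hzv
  exact (eL_uniq hG hL hR (hL x).1 hv2).symm

theorem m_eR {z x y : Γ} (h : m z x y) : eR z = eR y := by
  obtain ⟨u, hu1, hu2⟩ := (hG.2.1 x y (eR y) z).2 ⟨y, (hR y).2, h⟩
  have hzu : z = u := idr hG hL hR (hR y).1 hu2
  subst hzu
  exact (eR_uniq hG hL hR (hR y).1 hu2).symm

theorem m_comp {z x y : Γ} (h : m z x y) : eR x = eL y := by
  obtain ⟨v, hv1, -⟩ := (hG.2.1 x (eR x) y z).1 ⟨x, (hR x).2, h⟩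
  have hvy : v = y := idl hG hL hR (hR x).1 hv1
  subst hvy
  exact eL_uniq hG hL hR (hR x).1 hv1

theorem m_exists {x y : Γ} (hc : eR x = eL y) : ∃ v, m v x y ∧ m y (s x) v := by
  refine (hG.2.1 (s x) x y y).1 ⟨eR x, m_sinv_self hG hL hR x, ?_⟩
  rw [hc]; exact (hL y).2

theorem m_cancel {Z x y v : Γ} (h1 : m Z x y) (h2 : m y (s x) v) : Z = v := by
  obtain ⟨u, hu1, hu2⟩ := (hG.2.1 x (s x) v Z).2 ⟨y, h2, h1⟩
  have := m_self_sinv_uniq hG hL hR hu1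
  subst this
  exact idl hG hL hR (hL x).1 hu2

theorem m_cancel' {z x y Y : Γ} (h1 : m z x y) (h2 : m Y (s x) z) : Y = y := by
  obtain ⟨u, hu1, hu2⟩ := (hG.2.1 (s x) x y Y).2 ⟨z, h1, h2⟩
  exact idl hG hL hR (hG.2.2.2.2.2.2 x u hu1) hu2

theorem m_uniq {z z' x y : Γ} (h : m z x y) (h' : m z' x y) : z = z' := by
  obtain ⟨v, hv, hyv⟩ := m_exists hG hL hR (m_comp hG hL hR h)
  exact (m_cancel hG hL hR h hyv).trans (m_cancel hG hL hR h' hyv).symm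

theorem m_left_cancel {z x u v : Γ} (h1 : m z x u) (h2 : m z x v) : u = v := by
  obtain ⟨w, hw, -⟩ := m_exists hG hL hR
    (show eR (s x) = eL z from (eR_s hG hL hR x).trans (m_eL hG hL hR h1).symm)
  exact (m_cancel' hG hL hR h1 hw).symm.trans (m_cancel' hG hL hR h2 hw)

end

end ZG

namespace ZG

section Mul

variable {Γ : Type*} {m : Γ → Γ → Γ → Prop} {E : Set Γ} {s : Γ → Γ}
variable (hG : IsZGroupoid m E s)
variable {eL eR : Γ → Γ}
variable (hL : ∀ x, eL x ∈ E ∧ m x (eL x) x) (hR : ∀ x, eR x ∈ E ∧ m x x (eR x))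
variable {mul : Γ → Γ → Γ} (hmul : ∀ x y, eR x = eL y → m (mul x y) x y)

include hG hL hR hmul

theorem mul_eq {z x y : Γ} (h : m z x y) : mul x y = z :=
  m_uniq hG hL hR (hmul x y (m_comp hG hL hR h)) h

theorem mul_eL {x y : Γ} (hc : eR x = eL y) : eL (mul x y) = eL x :=
  m_eL hG hL hR (hmul x y hc)

theorem mul_eR {x y : Γ} (hc : eR x = eL y) : eR (mul x y) = eR y :=
  m_eR hG hL hR (hmul x y hc)

theorem mul_id_left {b y : Γ} (hb : b = eL y) : mul b y = y :=
  mul_eq hG hL hR hmul (hb ▸ (hL y).2)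

theorem mul_id_right {b y : Γ} (hb : b = eR y) : mul y b = y :=
  mul_eq hG hL hR hmul (hb ▸ (hR y).2)

theorem mul_sinv_self (x : Γ) : mul (s x) x = eR x :=
  mul_eq hG hL hR hmul (m_sinv_self hG hL hR x)

theorem mul_self_sinv (x : Γ) : mul x (s x) = eL x :=
  mul_eq hG hL hR hmul (m_self_sinv hG hL hR x)

theorem mul_assoc3 {x y z : Γ} (h1 : eR x = eL y) (h2 : eR y = eL z) :
    mul (mul x y) z = mul x (mul y z) := by
  have hxy := hmul x y h1
  have h3 : eR (mul x y) = eL z := (m_eR hG hL hR hxy).trans h2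
  have hall := hmul _ z h3
  obtain ⟨v, hv1, hv2⟩ := (hG.2.1 x y z (mul (mul x y) z)).1 ⟨mul x y, hxy, hall⟩
  rw [mul_eq hG hL hR hmul hv1]
  exact (mul_eq hG hL hR hmul hv2).symm

theorem s_mul {x y : Γ} (hc : eR x = eL y) : s (mul x y) = mul (s y) (s x) :=
  (mul_eq hG hL hR hmul (minv hG hL hR (hmul x y hc))).symm

end Mul

end ZG

namespace ZG

section Mor

variable {Γ Γ' : Type*}
variable {m : Γ → Γ → Γ → Prop} {E : Set Γ} {s : Γ → Γ}
variable (hG : IsZGroupoid m E s)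
variable {eL eR : Γ → Γ}
variable (hL : ∀ x, eL x ∈ E ∧ m x (eL x) x) (hR : ∀ x, eR x ∈ E ∧ m x x (eR x))
variable {m' : Γ' → Γ' → Γ' → Prop} {E' : Set Γ'} {s' : Γ' → Γ'}
variable (hG' : IsZGroupoid m' E' s')
variable {eL' eR' : Γ' → Γ'}
variable (hL' : ∀ y, eL' y ∈ E' ∧ m' y (eL' y) y) (hR' : ∀ y, eR' y ∈ E' ∧ m' y y (eR' y))
variable {mul' : Γ' → Γ' → Γ'} (hmul' : ∀ x y, eR' x = eL' y → m' (mul' x y) x y)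
variable {h : Γ' → Γ → Prop} (hmor : IsZMorphism m E s m' E' s' h)
variable {fh : Γ' → Γ} (hfh : ∀ b ∈ E', fh b ∈ E ∧ h b (fh b))
variable {hRmap : Γ' → Γ → Γ'}
variable (hhR : ∀ b ∈ E', ∀ x, eR x = fh b → h (hRmap b x) x ∧ eR' (hRmap b x) = b)

include hmor

theorem h_idmem {y : Γ'} {a : Γ} (ha : a ∈ E) (hy : h y a) : y ∈ E' := by
  rw [← hmor.2.2]; exact ⟨a, ha, hy⟩

include hG hL hR hG' hL' hR'

theorem h_eL {y : Γ'} {u : Γ} (hyu : h y u) : h (eL' y) (eL u) := by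
  obtain ⟨y₁, y₂, h1, h2, hm⟩ := (hmor.1 y (eL u) u).1 ⟨u, (hL u).2, hyu⟩
  have hE1 : y₁ ∈ E' := h_idmem hmor (hL u).1 h1
  have hy2 : y = y₂ := idl hG' hL' hR' hE1 hm
  subst hy2
  rw [← eL_uniq hG' hL' hR' hE1 hm]
  exact h1

theorem h_eR {y : Γ'} {u : Γ} (hyu : h y u) : h (eR' y) (eR u) := by
  obtain ⟨y₁, y₂, h1, h2, hm⟩ := (hmor.1 y u (eR u)).1 ⟨u, (hR u).2, hyu⟩
  have hE2 : y₂ ∈ E' := h_idmem hmor (hR u).1 h2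
  have hy1 : y = y₁ := idr hG' hL' hR' hE2 hm
  subst hy1
  rw [← eR_uniq hG' hL' hR' hE2 hm]
  exact h2

include hfh in
theorem fh_eq {b : Γ'} {c : Γ} (hb : b ∈ E') (hc : c ∈ E) (hbc : h b c) : fh b = c := by
  obtain ⟨x, hx, -⟩ := (hmor.1 b c (fh b)).2 ⟨b, b, hbc, (hfh b hb).2, m_id hG' hL' hR' hb⟩
  exact (idl hG hL hR hc hx).symm.trans (idr hG hL hR (hfh b hb).1 hx)

include hmul' hfh hhR in
theorem hR_uniq {b : Γ'} {x : Γ} {y : Γ'} (hb : b ∈ E') (hx : eR x = fh b)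
    (hy : h y x) (hyb : eR' y = b) : y = hRmap b x := by
  obtain ⟨hy₀, hy₀b⟩ := hhR b hb x hx
  have h1 : h (s' (hRmap b x)) (s x) :=
    (hmor.2.1 (s' (hRmap b x)) x).mpr (by rw [hG'.1]; exact hy₀)
  have hcomp : eR' y = eL' (s' (hRmap b x)) := by
    rw [eL_s hG' hL' hR', hy₀b, hyb]
  have hmY : m' (mul' y (s' (hRmap b x))) y (s' (hRmap b x)) := hmul' _ _ hcomp
  obtain ⟨w, hw, hYw⟩ := (hmor.1 (mul' y (s' (hRmap b x))) x (s x)).2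
    ⟨y, s' (hRmap b x), hy, h1, hmY⟩
  have hwE : w = eL x := m_self_sinv_uniq hG hL hR hw
  have hYE : mul' y (s' (hRmap b x)) ∈ E' := h_idmem hmor (hL x).1 (hwE ▸ hYw)
  have h2 : mul' y (s' (hRmap b x)) = eL' y :=
    (eL_id hG' hL' hR' hYE).symm.trans (m_eL hG' hL' hR' hmY)
  rw [h2] at hmY
  have h3 : s' (hRmap b x) = s' y :=
    m_left_cancel hG' hL' hR' hmY (m_self_sinv hG' hL' hR' y)
  rw [← hG'.1 y, ← h3, hG'.1]

end Mor

end ZG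

namespace ZG

section Finsum

open Function

variable {α β α' β' : Type*}

theorem mul_finsum_mem {T : Set α} {g : α → ℂ} (hfin : (T ∩ support g).Finite) (c : ℂ) :
    c * ∑ᶠ x ∈ T, g x = ∑ᶠ x ∈ T, c * g x := by
  classical
  have hset : T ∩ support (fun x => c * g x) = ↑hfin.toFinset ∩ support (fun x => c * g x) := by
    rw [Set.Finite.coe_toFinset]
    ext x
    simp only [Set.mem_inter_iff, mem_support]
    exact ⟨fun ⟨h1, h2⟩ => ⟨⟨h1, fun hg => h2 (by rw [hg, mul_zero])⟩, h2⟩,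
      fun ⟨⟨h1, _⟩, h2⟩ => ⟨h1, h2⟩⟩
  rw [finsum_mem_eq_sum g hfin, Finset.mul_sum,
    finsum_mem_eq_sum_of_inter_support_eq (fun x => c * g x) hset]

theorem finsum_mem_mul_right {T : Set α} {g : α → ℂ} (hfin : (T ∩ support g).Finite) (c : ℂ) :
    (∑ᶠ x ∈ T, g x) * c = ∑ᶠ x ∈ T, g x * c := by
  rw [mul_comm, mul_finsum_mem hfin c]
  exact finsum_mem_congr rfl fun x _ => mul_comm c (g x)

theorem star_finsum_mem {T : Set α} {g : α → ℂ} (hfin : (T ∩ support g).Finite) :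
    star (∑ᶠ x ∈ T, g x) = ∑ᶠ x ∈ T, star (g x) := by
  classical
  have hset : T ∩ support (fun x => star (g x)) = ↑hfin.toFinset ∩ support fun x => star (g x) := by
    rw [Set.Finite.coe_toFinset]
    ext x
    simp only [Set.mem_inter_iff, mem_support, star_ne_zero]
    tauto
  rw [finsum_mem_eq_sum g hfin, star_sum,
    finsum_mem_eq_sum_of_inter_support_eq (fun x => star (g x)) hset]

theorem double_finsum_pair {S : Set α} {T : α → Set β} {F : α → β → ℂ}
    (hfin : {p : α × β | p.1 ∈ S ∧ p.2 ∈ T p.1 ∧ F p.1 p.2 ≠ 0}.Finite) :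
    ∑ᶠ y ∈ S, ∑ᶠ x ∈ T y, F y x = ∑ᶠ p ∈ {p : α × β | p.1 ∈ S ∧ p.2 ∈ T p.1}, F p.1 p.2 := by
  classical
  set t : Finset (α × β) := hfin.toFinset with ht
  have hmemt : ∀ p : α × β, p ∈ t ↔ p.1 ∈ S ∧ p.2 ∈ T p.1 ∧ F p.1 p.2 ≠ 0 := fun p => by
    rw [ht, Set.Finite.mem_toFinset]; rfl
  have step1 : ∀ y ∈ S, (∑ᶠ x ∈ T y, F y x)
      = ∑ p ∈ t.filter (fun p => p.1 = y), F p.1 p.2 := by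
    intro y hy
    have hset : T y ∩ support (F y)
        = ↑((t.filter (fun p => p.1 = y)).image Prod.snd) ∩ support (F y) := by
      ext x
      simp only [Set.mem_inter_iff, mem_support, Finset.coe_image, Set.mem_image,
        Finset.mem_coe, Finset.mem_filter]
      constructor
      · rintro ⟨h1, h2⟩
        exact ⟨⟨(y, x), ⟨(hmemt (y, x)).2 ⟨hy, h1, h2⟩, rfl⟩, rfl⟩, h2⟩
      · rintro ⟨⟨p, ⟨hp, hp1⟩, hp2⟩, h2⟩
        subst hp2
        have := ((hmemt p).1 hp).2.1
        rw [hp1] at this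
        exact ⟨this, h2⟩
    rw [finsum_mem_eq_sum_of_inter_support_eq (F y) hset, Finset.sum_image ?_]
    · refine Finset.sum_congr rfl fun p hp => ?_
      rw [(Finset.mem_filter.1 hp).2]
    · intro p hp q hq hpq
      exact Prod.ext (((Finset.mem_filter.1 hp).2).trans ((Finset.mem_filter.1 hq).2).symm) hpq
  rw [finsum_mem_congr rfl step1]
  have hset2 : S ∩ support (fun y => ∑ p ∈ t.filter (fun p => p.1 = y), F p.1 p.2)
      = ↑(t.image Prod.fst) ∩ support (fun y => ∑ p ∈ t.filter (fun p => p.1 = y), F p.1 p.2) := by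
    ext y
    simp only [Set.mem_inter_iff, mem_support, Finset.coe_image, Set.mem_image, Finset.mem_coe]
    constructor
    · rintro ⟨h1, h2⟩
      obtain ⟨p, hp, -⟩ := Finset.exists_ne_zero_of_sum_ne_zero h2
      exact ⟨⟨p, (Finset.mem_filter.1 hp).1, (Finset.mem_filter.1 hp).2⟩, h2⟩
    · rintro ⟨⟨p, hp, hp1⟩, h2⟩
      have := ((hmemt p).1 hp).1
      rw [hp1] at this
      exact ⟨this, h2⟩
  rw [finsum_mem_eq_sum_of_inter_support_eq _ hset2,
    Finset.sum_fiberwise_of_maps_to (fun p hp => Finset.mem_image_of_mem Prod.fst hp)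
      (fun p => F p.1 p.2)]
  have hset3 : {p : α × β | p.1 ∈ S ∧ p.2 ∈ T p.1} ∩ support (fun p => F p.1 p.2)
      = ↑t ∩ support (fun p => F p.1 p.2) := by
    ext p
    simp only [Set.mem_inter_iff, mem_support, Set.mem_setOf_eq, Finset.mem_coe, hmemt]
    tauto
  rw [finsum_mem_eq_sum_of_inter_support_eq _ hset3]

theorem double_finsum_bij {S : Set α} {T : α → Set β} {F : α → β → ℂ}
    {S' : Set α'} {T' : α' → Set β'} {G : α' → β' → ℂ}
    (hfin : {p : α × β | p.1 ∈ S ∧ p.2 ∈ T p.1 ∧ F p.1 p.2 ≠ 0}.Finite)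
    (hfin' : {p : α' × β' | p.1 ∈ S' ∧ p.2 ∈ T' p.1 ∧ G p.1 p.2 ≠ 0}.Finite)
    (e : α → β → α' × β') (e' : α' → β' → α × β)
    (he : ∀ y x, y ∈ S → x ∈ T y →
      (e y x).1 ∈ S' ∧ (e y x).2 ∈ T' (e y x).1 ∧ G (e y x).1 (e y x).2 = F y x ∧
        e' (e y x).1 (e y x).2 = (y, x))
    (he' : ∀ z w, z ∈ S' → w ∈ T' z →
      (e' z w).1 ∈ S ∧ (e' z w).2 ∈ T (e' z w).1 ∧ e (e' z w).1 (e' z w).2 = (z, w)) :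
    ∑ᶠ y ∈ S, ∑ᶠ x ∈ T y, F y x = ∑ᶠ z ∈ S', ∑ᶠ w ∈ T' z, G z w := by
  rw [double_finsum_pair hfin, double_finsum_pair hfin']
  refine finsum_mem_eq_of_bijOn (fun p => e p.1 p.2) ⟨?_, ?_, ?_⟩ ?_
  · rintro ⟨y, x⟩ ⟨h1, h2⟩
    exact ⟨(he y x h1 h2).1, (he y x h1 h2).2.1⟩
  · rintro ⟨y, x⟩ ⟨h1, h2⟩ ⟨y', x'⟩ ⟨h1', h2'⟩ hexy
    have h3 := (he y x h1 h2).2.2.2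
    dsimp only at hexy h3 ⊢
    rw [hexy, (he y' x' h1' h2').2.2.2] at h3
    exact h3.symm
  · rintro ⟨z, w⟩ ⟨h1, h2⟩
    exact ⟨e' z w, ⟨(he' z w h1 h2).1, (he' z w h1 h2).2.1⟩, by simp [(he' z w h1 h2).2.2]⟩
  · rintro ⟨y, x⟩ ⟨h1, h2⟩
    exact ((he y x h1 h2).2.2.1).symm

end Finsum

end ZG


/-- `f₃* · (ĥ(f₁) f₂) = (ĥ(f₁*) f₃)* · f₂`, the left side computed by the left-fiber
convolution formula and the right side by the right-fiber formula. -/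
theorem stmt16 {Γ Γ' : Type*}
    (m : Γ → Γ → Γ → Prop) (E : Set Γ) (s : Γ → Γ) (hG : IsZGroupoid m E s)
    (m' : Γ' → Γ' → Γ' → Prop) (E' : Set Γ') (s' : Γ' → Γ') (hG' : IsZGroupoid m' E' s')
    (eL eR : Γ → Γ)
    (hL : ∀ x, eL x ∈ E ∧ m x (eL x) x) (hR : ∀ x, eR x ∈ E ∧ m x x (eR x))
    (eL' eR' : Γ' → Γ')
    (hL' : ∀ y, eL' y ∈ E' ∧ m' y (eL' y) y) (hR' : ∀ y, eR' y ∈ E' ∧ m' y y (eR' y))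
    (mul' : Γ' → Γ' → Γ') (hmul' : ∀ x y, eR' x = eL' y → m' (mul' x y) x y)
    (h : Γ' → Γ → Prop) (hmor : IsZMorphism m E s m' E' s' h)
    (fh : Γ' → Γ) (hfh : ∀ b ∈ E', fh b ∈ E ∧ h b (fh b))
    (hRmap : Γ' → Γ → Γ')
    (hhR : ∀ b ∈ E', ∀ x, eR x = fh b → h (hRmap b x) x ∧ eR' (hRmap b x) = b)
    (f₁ : Γ → ℂ) (hf₁ : {x | f₁ x ≠ 0}.Finite)
    (f₂ f₃ : Γ' → ℂ) (hf₂ : {y | f₂ y ≠ 0}.Finite) (hf₃ : {y | f₃ y ≠ 0}.Finite) :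
    zconvL eL' s' mul' (zstar s' f₃) (hhatOp eL s eL' mul' fh hRmap f₁ f₂)
      = zconvR eR' s' mul' (zstar s' (hhatOp eL s eL' mul' fh hRmap (zstar s f₁) f₃)) f₂ := by
  have ss := hG.1
  have ss' := hG'.1
  have eLs := ZG.eL_s hG hL hR
  have eRs := ZG.eR_s hG hL hR
  have eLs' := ZG.eL_s hG' hL' hR'
  have eRs' := ZG.eR_s hG' hL' hR'
  have muleL : ∀ {x y : Γ'}, eR' x = eL' y → eL' (mul' x y) = eL' x :=
    fun hc => ZG.mul_eL hG' hL' hR' hmul' hc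
  have muleR : ∀ {x y : Γ'}, eR' x = eL' y → eR' (mul' x y) = eR' y :=
    fun hc => ZG.mul_eR hG' hL' hR' hmul' hc
  have mulassoc : ∀ {x y z : Γ'}, eR' x = eL' y → eR' y = eL' z →
      mul' (mul' x y) z = mul' x (mul' y z) :=
    fun h1 h2 => ZG.mul_assoc3 hG' hL' hR' hmul' h1 h2
  have smul : ∀ {x y : Γ'}, eR' x = eL' y → s' (mul' x y) = mul' (s' y) (s' x) :=
    fun hc => ZG.s_mul hG' hL' hR' hmul' hc
  have mulidl : ∀ {b y : Γ'}, b = eL' y → mul' b y = y :=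
    fun hb => ZG.mul_id_left hG' hL' hR' hmul' hb
  have mulidr : ∀ {b y : Γ'}, b = eR' y → mul' y b = y :=
    fun hb => ZG.mul_id_right hG' hL' hR' hmul' hb
  have mulss : ∀ x : Γ', mul' (s' x) x = eR' x := ZG.mul_sinv_self hG' hL' hR' hmul'
  have mulss2 : ∀ x : Γ', mul' x (s' x) = eL' x := ZG.mul_self_sinv hG' hL' hR' hmul'
  have heL : ∀ {y : Γ'} {u : Γ}, h y u → h (eL' y) (eL u) :=
    fun hyu => ZG.h_eL hG hL hR hG' hL' hR' hmor hyu
  have fheq : ∀ {b : Γ'} {c : Γ}, b ∈ E' → c ∈ E → h b c → fh b = c :=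
    fun hb hc hbc => ZG.fh_eq hG hL hR hG' hL' hR' hmor hfh hb hc hbc
  have hruniq : ∀ {b : Γ'} {x : Γ} {y : Γ'}, b ∈ E' → eR x = fh b → h y x → eR' y = b →
      y = hRmap b x :=
    fun hb hx hy hyb => ZG.hR_uniq hG hL hR hG' hL' hR' hmul' hmor hfh hhR hb hx hy hyb
  have hf₁s : {w : Γ | f₁ (s w) ≠ 0}.Finite :=
    (hf₁.image s).subset (fun w hw => ⟨s w, hw, ss w⟩)
  have hf₃s : {y : Γ' | f₃ (s' y) ≠ 0}.Finite :=
    (hf₃.image s').subset (fun y hy => ⟨s' y, hy, ss' y⟩)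
  funext x'
  simp only [zconvL, zconvR, zstar, hhatOp]
  refine Eq.trans (finsum_mem_congr rfl fun y _ =>
    ZG.mul_finsum_mem (hf₁.subset fun x hx => left_ne_zero_of_mul hx.2) (star (f₃ (s' y)))) ?_
  refine Eq.trans ?_ (finsum_mem_congr rfl fun z _ => (by
    rw [ZG.star_finsum_mem (hf₁s.subset fun w hw =>
          star_ne_zero.1 (left_ne_zero_of_mul hw.2)),
        ZG.finsum_mem_mul_right (hf₁s.subset fun w hw =>
          star_ne_zero.1 (left_ne_zero_of_mul (star_ne_zero.1 hw.2))) (f₂ z)] :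
    star (∑ᶠ x ∈ {x | eL x = fh (eL' (s' (mul' x' (s' z))))},
        star (f₁ (s x)) * f₃ (mul' (hRmap (eL' (s' (mul' x' (s' z)))) (s x)) (s' (mul' x' (s' z))))) * f₂ z
      = ∑ᶠ w ∈ {x | eL x = fh (eL' (s' (mul' x' (s' z))))},
          star (star (f₁ (s w)) * f₃ (mul' (hRmap (eL' (s' (mul' x' (s' z)))) (s w)) (s' (mul' x' (s' z))))) * f₂ z).symm)
  refine ZG.double_finsum_bij ?_ ?_
    (fun y x => (mul' (hRmap (eL' (mul' (s' y) x')) (s x)) (mul' (s' y) x'), s x))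
    (fun z w => (s' (mul' (hRmap (eL' (s' (mul' x' (s' z)))) (s w)) (s' (mul' x' (s' z)))), s w))
    ?_ ?_
  · -- finiteness of LHS pair set
    refine (hf₃s.prod hf₁).subset fun p hp => ⟨?_, ?_⟩
    · exact star_ne_zero.1 (left_ne_zero_of_mul hp.2.2)
    · exact left_ne_zero_of_mul (right_ne_zero_of_mul hp.2.2)
  · -- finiteness of RHS pair set
    refine (hf₂.prod hf₁s).subset fun p hp => ⟨?_, ?_⟩
    · exact right_ne_zero_of_mul hp.2.2
    · exact star_ne_zero.1 (left_ne_zero_of_mul (star_ne_zero.1 (left_ne_zero_of_mul hp.2.2)))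
  · -- forward
    intro y x hy hx
    simp only [Set.mem_setOf_eq] at hy hx
    dsimp only
    have comp1 : eR' (s' y) = eL' x' := (eRs' y).trans hy
    have eLu : eL' (mul' (s' y) x') = eR' y := (muleL comp1).trans (eLs' y)
    have hsx : eR (s x) = fh (eL' (mul' (s' y) x')) := (eRs x).trans hx
    obtain ⟨hw'h, hw'b⟩ := hhR _ (hL' (mul' (s' y) x')).1 (s x) hsx
    set w' := hRmap (eL' (mul' (s' y) x')) (s x) with hw'def
    set z := mul' w' (mul' (s' y) x') with hzdef
    have hzS : eR' z = eR' x' := (muleR hw'b).trans (muleR comp1)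
    have compw : eR' w' = eL' (s' y) := hw'b.trans (eLu.trans (eLs' y).symm)
    have compA : eR' (s' x') = eL' y := (eRs' x').trans hy.symm
    have e1 : s' (mul' (s' y) x') = mul' (s' x') y := by
      rw [smul comp1, ss']
    have e2 : s' z = mul' (mul' (s' x') y) (s' w') := by
      rw [hzdef, smul hw'b, e1]
    have e3 : mul' x' (s' z) = mul' y (s' w') := by
      have h1 : eR' x' = eL' (mul' (s' x') y) := by rw [muleL compA, eLs']
      have h2 : eR' (mul' (s' x') y) = eL' (s' w') := by
        rw [muleR compA, eLs', hw'b, eLu]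
      rw [e2, ← mulassoc h1 h2, ← mulassoc (eLs' x').symm compA, mulss2, mulidl hy.symm]
    have compy : eR' y = eL' (s' w') := by rw [eLs', hw'b, eLu]
    have e4 : s' (mul' x' (s' z)) = mul' w' (s' y) := by
      rw [e3, smul compy, ss']
    have eLv : eL' (s' (mul' x' (s' z))) = eL' w' := by rw [e4, muleL compw]
    have hfhw : fh (eL' w') = eR x := by
      have h5 := heL hw'h
      rw [eLs x] at h5
      exact fheq (hL' w').1 (hR x).1 h5
    have hxT : eL (s x) = fh (eL' (s' (mul' x' (s' z)))) := by rw [eLv, hfhw, eLs]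
    have hrw : hRmap (eL' (s' (mul' x' (s' z)))) (s (s x)) = s' w' := by
      rw [eLv, ss]
      exact (hruniq (hL' w').1 hfhw.symm ((hmor.2.1 w' x).1 hw'h) (eRs' w')).symm
    have e5 : mul' (hRmap (eL' (s' (mul' x' (s' z)))) (s (s x))) (s' (mul' x' (s' z))) = s' y := by
      rw [hrw, e4, ← mulassoc (eRs' w') compw, mulss, mulidl compw]
    refine ⟨hzS, hxT, ?_, ?_⟩
    · rw [e5, ss]
      simp only [star_mul', star_star]
      ring
    · rw [Prod.mk.injEq]
      exact ⟨by rw [e5, ss'], ss x⟩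
  · -- backward
    intro z w hz hw
    simp only [Set.mem_setOf_eq] at hz hw
    dsimp only
    have hsw : eR (s w) = fh (eL' (s' (mul' x' (s' z)))) := (eRs w).trans hw
    obtain ⟨hp'h, hp'b⟩ := hhR _ (hL' (s' (mul' x' (s' z)))).1 (s w) hsw
    set p' := hRmap (eL' (s' (mul' x' (s' z)))) (s w) with hp'def
    set y := s' (mul' p' (s' (mul' x' (s' z)))) with hydef
    have compV : eR' x' = eL' (s' z) := by rw [eLs', hz]
    have v'eq2 : s' (mul' x' (s' z)) = mul' z (s' x') := by rw [smul compV, ss']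
    have compz2 : eR' z = eL' (s' x') := by rw [eLs']; exact hz
    have hc_eLz : eL' (s' (mul' x' (s' z))) = eL' z := by rw [v'eq2]; exact muleL compz2
    have compY : eR' (s' (s' (mul' x' (s' z)))) = eL' (s' p') := by
      rw [ss', eLs', hp'b, eLs']
    have yeq : y = mul' (s' (s' (mul' x' (s' z)))) (s' p') := hydef.trans (smul hp'b)
    have hyS : eL' y = eL' x' := by
      rw [yeq, muleL compY, eLs', eRs', muleL compV]
    have compPz : eR' p' = eL' z := hp'b.trans hc_eLz
    have sy_eq : s' y = mul' p' (s' (mul' x' (s' z))) := by rw [hydef, ss']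
    have u'eq : mul' (s' y) x' = mul' p' z := by
      rw [sy_eq]
      have h2 : eR' (s' (mul' x' (s' z))) = eL' x' := by rw [eRs', muleL compV]
      rw [mulassoc hp'b h2]
      congr 1
      rw [v'eq2, mulassoc compz2 (eRs' x'), mulss]
      exact mulidr hz.symm
    have eLu2 : eL' (mul' (s' y) x') = eL' p' := by rw [u'eq, muleL compPz]
    have hfp : fh (eL' p') = eR w := by
      have h5 := heL hp'h
      rw [eLs w] at h5
      exact fheq (hL' p').1 (hR w).1 h5
    have hwT1 : eL (s w) = fh (eL' (mul' (s' y) x')) := by rw [eLu2, hfp, eLs]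
    have hrw2 : hRmap (eL' (mul' (s' y) x')) (s (s w)) = s' p' := by
      rw [eLu2, ss]
      exact (hruniq (hL' p').1 hfp.symm ((hmor.2.1 p' w).1 hp'h) (eRs' p')).symm
    have e9 : mul' (hRmap (eL' (mul' (s' y) x')) (s (s w))) (mul' (s' y) x') = z := by
      rw [hrw2, u'eq, ← mulassoc (eRs' p') compPz, mulss, mulidl compPz]
    refine ⟨hyS, hwT1, ?_⟩
    rw [Prod.mk.injEq]
    exact ⟨e9, ss w⟩
end
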